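/- arXiv:math/9804136 — 6 statements merged into one kernel-verified Lean document; each statement's English description precedes it below -/
import Mathlib

section
/- Let (f_I)_I be a closed l-form with polynomial coefficients on ℝ^p with l ≥ 1 and deg f_I ≤ m for every I. Then there exists a family (g_K)_K of complex polynomial functions on ℝ^p, indexed by the strictly increasing (l−1)-tuples K from {1,…,p}, with deg g_K ≤ m+1 for every K, such that for every strictly increasing l-tuple I = (i_1 < … < i_l) one has f_I = Σ_{a=1}^{l} (−1)^{a−1} ∂_{i_a} g_{I∖i_a}, where I∖i_a denotes I with the entry i_a removed. (For l = 1 the family (g_K) consists of a single polynomial g with ∂_i g = f_{(i)} for all i.) -/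
/-!
Contraction with the Euler field `E = ∑ⱼ xⱼ ∂ⱼ` is a homotopy operator. For a closed `l`-form `ω`
whose coefficients are homogeneous of degree `d`, Cartan's formula gives
`d (ι_E ω) = L_E ω = (d + l) ω`: the term `∑ⱼ xⱼ ∂ⱼ ω_I` contributes `d ω_I` by Euler's identity,
and each of the `l` differentials `dx_{iₐ}` contributes `ω_I`. The homogeneous components of a
closed form are closed, so `g = ∑_{d ≤ m} (d + l)⁻¹ ι_E ω_d` is a primitive of degree `≤ m + 1`.
-/

open MvPolynomial Finset

namespace Fin

variable {n : ℕ}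

lemma val_succAbove (p : Fin (n + 1)) (i : Fin n) :
    (p.succAbove i : ℕ) = if (i : ℕ) < p then (i : ℕ) else i + 1 := by
  unfold succAbove
  split_ifs <;> simp_all [Fin.lt_def]

lemma val_add_val_add_one_of_succAbove {p q : Fin (n + 2)} {a b : Fin (n + 1)}
    (ha : p.succAbove a = q) (hb : q.succAbove b = p) : (a : ℕ) + b + 1 = p + q := by
  rw [← Fin.val_inj, val_succAbove] at ha hb
  split_ifs at ha hb <;> omega

lemma strictMono_insertNth_of_forall {α : Type*} [Preorder α] {f : Fin n → α}
    (hf : StrictMono f) {i : Fin (n + 1)} {x : α} (hlt : ∀ b, b.castSucc < i → f b < x)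
    (hgt : ∀ b, i ≤ b.castSucc → x < f b) : StrictMono (insertNth i x f) := by
  intro c c' h
  induction c using succAboveCases i with
  | x =>
    induction c' using succAboveCases i with
    | x => exact absurd h (lt_irrefl _)
    | p b =>
      simpa using hgt b ((lt_succAbove_iff_le_castSucc _ _).mp h)
  | p b =>
    induction c' using succAboveCases i with
    | x => simpa using hlt b ((succAbove_lt_iff_castSucc_lt _ _).mp h)
    | p b' => simpa using hf ((strictMono_succAbove i).lt_iff_lt.mp h)

lemma range_comp_succAbove {α : Type*} {g : Fin (n + 1) → α} (hg : g.Injective)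
    (b : Fin (n + 1)) : Set.range (g ∘ b.succAbove) = Set.range g \ {g b} := by
  rw [Set.range_comp, range_succAbove, Set.image_compl_eq_range_sdiff_image hg,
    Set.image_singleton]

lemma notMem_range_comp_succAbove {α : Type*} {g : Fin (n + 1) → α} {x : α}
    (hx : x ∉ Set.range g) (b : Fin (n + 1)) : x ∉ Set.range (g ∘ b.succAbove) :=
  fun ⟨c, hc⟩ => hx ⟨b.succAbove c, hc⟩

end Fin

lemma MvPolynomial.pderiv_homogeneousComponent_succ {R σ : Type*} [CommSemiring R] (i : σ)
    (d : ℕ) (φ : MvPolynomial σ R) :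
    pderiv i (homogeneousComponent (d + 1) φ) = homogeneousComponent d (pderiv i φ) := by
  ext s
  simp only [coeff_pderiv, coeff_homogeneousComponent, map_add, Finsupp.degree_single,
    add_left_inj]
  split_ifs <;> simp

lemma MvPolynomial.sum_homogeneousComponent_of_totalDegree_le {R σ : Type*} [CommSemiring R]
    {φ : MvPolynomial σ R} {m : ℕ} (h : φ.totalDegree ≤ m) :
    ∑ d ∈ range (m + 1), homogeneousComponent d φ = φ := by
  have hsub : range (φ.totalDegree + 1) ⊆ range (m + 1) := range_subset_range.mpr (by omega)
  rw [← Finset.sum_subset hsub fun d _ hd =>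
    homogeneousComponent_eq_zero d φ (by simp only [mem_range, not_lt] at hd; omega)]
  exact sum_homogeneousComponent φ

lemma neg_one_pow_smul_neg_one_pow_smul {R M : Type*} [Monoid R] [HasDistribNeg R]
    [MulAction R M] (k : ℕ) (x : M) : (-1 : R) ^ k • (-1 : R) ^ k • x = x := by
  rw [smul_smul, ← pow_add, Even.neg_one_pow ⟨k, rfl⟩, one_smul]

namespace PolynomialForm

section SortedInsertion

variable {α : Type*} [LinearOrder α] {n : ℕ}

def insertPos (x : α) (K : Fin n → α) : Fin (n + 1) :=
  ⟨#{b | K b < x}, Nat.lt_succ_of_le ((card_filter_le _ _).trans (card_fin n).le)⟩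

def insertSorted (x : α) (K : Fin n → α) : Fin (n + 1) → α :=
  Fin.insertNth (insertPos x K) x K

@[simp]
lemma insertSorted_apply_insertPos (x : α) (K : Fin n → α) :
    insertSorted x K (insertPos x K) = x :=
  Fin.insertNth_apply_same _ _ _

@[simp]
lemma insertSorted_apply_succAbove (x : α) (K : Fin n → α) (b : Fin n) :
    insertSorted x K ((insertPos x K).succAbove b) = K b :=
  Fin.insertNth_apply_succAbove _ _ _ _

lemma lt_insertPos_iff {x : α} {K : Fin n → α} (hK : Monotone K) (b : Fin n) :
    (b : ℕ) < insertPos x K ↔ K b < x := by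
  refine ⟨fun h => ?_, fun h => ?_⟩
  · by_contra hb
    have : ({b' | K b' < x} : Finset (Fin n)) ⊆ Iio b := fun b' hb' => by
      rw [Finset.mem_filter_univ] at hb'
      exact mem_Iio.mpr (lt_of_not_ge fun hle => hb (lt_of_le_of_lt (hK hle) hb'))
    have := card_le_card this
    rw [Fin.card_Iio] at this
    exact absurd h (not_lt.mpr this)
  · have : Iic b ⊆ ({b' | K b' < x} : Finset (Fin n)) := fun b' hb' =>
      (Finset.mem_filter_univ _).mpr (lt_of_le_of_lt (hK (mem_Iic.mp hb')) h)
    have := card_le_card this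
    rw [Fin.card_Iic] at this
    exact Nat.lt_of_succ_le this

lemma insertPos_eq_of_forall {x : α} {K : Fin n → α} {c : Fin (n + 1)}
    (h : ∀ b, K b < x ↔ (b : ℕ) < c) : insertPos x K = c := by
  ext
  simp only [insertPos, h, Fin.card_filter_val_lt]
  omega

lemma strictMono_insertSorted {x : α} {K : Fin n → α} (hK : StrictMono K)
    (hx : x ∉ Set.range K) : StrictMono (insertSorted x K) := by
  refine Fin.strictMono_insertNth_of_forall hK (fun b hb => ?_) (fun b hb => ?_)
  · exact (lt_insertPos_iff hK.monotone b).mp hb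
  · refine lt_of_le_of_ne (not_lt.mp fun h => ?_) fun h => hx ⟨b, h.symm⟩
    exact not_lt.mpr hb ((lt_insertPos_iff hK.monotone b).mpr h)

lemma range_insertSorted (x : α) (K : Fin n → α) :
    Set.range (insertSorted x K) = insert x (Set.range K) :=
  Fin.range_insertNth _ _ _

variable {I : Fin (n + 1) → α}

lemma insertPos_comp_succAbove_self (hI : StrictMono I) (a : Fin (n + 1)) :
    insertPos (I a) (I ∘ a.succAbove) = a :=
  insertPos_eq_of_forall fun b => by
    rw [Function.comp_apply, hI.lt_iff_lt, Fin.succAbove_lt_iff_castSucc_lt, Fin.lt_def,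
      Fin.val_castSucc]

lemma insertSorted_comp_succAbove_self (hI : StrictMono I) (a : Fin (n + 1)) :
    insertSorted (I a) (I ∘ a.succAbove) = I := by
  rw [insertSorted, insertPos_comp_succAbove_self hI]
  exact Fin.insertNth_self_removeNth a I

lemma insertSorted_comp_succAbove {x : α} (hI : StrictMono I) (hx : x ∉ Set.range I)
    (a : Fin (n + 1)) :
    insertSorted x I ∘ ((insertPos x I).succAbove a).succAbove =
      insertSorted x (I ∘ a.succAbove) := by
  have hJ := strictMono_insertSorted hI hx
  refine ((hJ.comp (Fin.strictMono_succAbove _)).range_inj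
    (strictMono_insertSorted (hI.comp (Fin.strictMono_succAbove a))
      (Fin.notMem_range_comp_succAbove hx a))).mp ?_
  have hne : x ≠ I a := fun h => hx ⟨a, h.symm⟩
  rw [Fin.range_comp_succAbove hJ.injective, range_insertSorted, range_insertSorted,
    Fin.range_comp_succAbove hI.injective, insertSorted_apply_succAbove,
    Set.insert_sdiff_singleton_comm hne]

lemma val_add_insertPos_comp_succAbove {x : α} (hI : StrictMono I) (hx : x ∉ Set.range I)
    (a : Fin (n + 1)) :
    (a : ℕ) + insertPos x (I ∘ a.succAbove) + 1 =
      insertPos x I + (insertPos x I).succAbove a := by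
  obtain ⟨b, hb⟩ := Fin.exists_succAbove_eq (Fin.succAbove_ne (insertPos x I) a).symm
  have hpos : insertPos x (I ∘ a.succAbove) = b := by
    have hK := strictMono_insertSorted (hI.comp (Fin.strictMono_succAbove a))
      (Fin.notMem_range_comp_succAbove hx a)
    refine hK.injective ?_
    rw [insertSorted_apply_insertPos, ← insertSorted_comp_succAbove hI hx a,
      Function.comp_apply, hb, insertSorted_apply_insertPos]
  rw [hpos]
  exact Fin.val_add_val_add_one_of_succAbove rfl hb

end SortedInsertion

variable {R : Type*} [CommRing R] {p n : ℕ}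

/-- `n`-forms with polynomial coefficients, recorded on all `n`-tuples of indices; only the
values on strictly increasing tuples carry meaning. -/
abbrev PolyForm (R : Type*) [CommRing R] (p n : ℕ) := (Fin n → Fin p) → MvPolynomial (Fin p) R

noncomputable def extDeriv (ω : PolyForm R p n) : PolyForm R p (n + 1) := fun I =>
  ∑ a : Fin (n + 1), ((-1 : R) ^ (a : ℕ)) • pderiv (I a) (ω (I ∘ a.succAbove))

def IsClosedForm (ω : PolyForm R p n) : Prop :=
  ∀ J, StrictMono J → extDeriv ω J = 0

lemma extDeriv_sum_smul {ι : Type*} (s : Finset ι) (c : ι → R) (ω : ι → PolyForm R p n)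
    (I : Fin (n + 1) → Fin p) :
    extDeriv (fun K => ∑ i ∈ s, c i • ω i K) I = ∑ i ∈ s, c i • extDeriv (ω i) I := by
  simp only [extDeriv, map_sum, Derivation.map_smul, Finset.smul_sum]
  rw [Finset.sum_comm]
  simp only [smul_comm (c _)]

lemma extDeriv_homogeneousComponent_succ (ω : PolyForm R p n) (d : ℕ)
    (I : Fin (n + 1) → Fin p) :
    extDeriv (fun K => homogeneousComponent (d + 1) (ω K)) I =
      homogeneousComponent d (extDeriv ω I) := by
  simp only [extDeriv, map_sum, map_smul, pderiv_homogeneousComponent_succ]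

lemma IsClosedForm.homogeneousComponent {ω : PolyForm R p n} (hω : IsClosedForm ω) (d : ℕ) :
    IsClosedForm fun K => homogeneousComponent d (ω K) := by
  intro J hJ
  cases d with
  | zero => simp [extDeriv, homogeneousComponent_zero]
  | succ d => rw [extDeriv_homogeneousComponent_succ, hω J hJ, map_zero]

/-- The interior product `ι_{∂ⱼ} ω`. For `j ∉ K` its `K`-coefficient is `ω` at the sorted tuple
`K ∪ {j}`, with the sign of moving `j` from the front to its sorted position. -/
noncomputable def contract (ω : PolyForm R p (n + 1)) (j : Fin p) : PolyForm R p n := fun K =>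
  if j ∈ Set.range K then 0 else ((-1 : R) ^ (insertPos j K : ℕ)) • ω (insertSorted j K)

variable {ω : PolyForm R p (n + 1)} {j : Fin p}

lemma contract_of_mem {K : Fin n → Fin p} (h : j ∈ Set.range K) : contract ω j K = 0 :=
  if_pos h

lemma contract_of_notMem {K : Fin n → Fin p} (h : j ∉ Set.range K) :
    contract ω j K = ((-1 : R) ^ (insertPos j K : ℕ)) • ω (insertSorted j K) :=
  if_neg h

lemma contract_comp_succAbove_self {I : Fin (n + 1) → Fin p} (hI : StrictMono I)
    (a : Fin (n + 1)) : contract ω (I a) (I ∘ a.succAbove) = ((-1 : R) ^ (a : ℕ)) • ω I := by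
  have hnot : I a ∉ Set.range (I ∘ a.succAbove) := fun ⟨b, hb⟩ =>
    Fin.succAbove_ne a b (hI.injective hb)
  rw [contract_of_notMem hnot, insertPos_comp_succAbove_self hI,
    insertSorted_comp_succAbove_self hI]

lemma extDeriv_contract (hω : IsClosedForm ω)
    {I : Fin (n + 1) → Fin p} (hI : StrictMono I) (j : Fin p) :
    extDeriv (contract ω j) I = pderiv j (ω I) := by
  by_cases hj : j ∈ Set.range I
  · obtain ⟨b, rfl⟩ := hj
    rw [extDeriv, Finset.sum_eq_single b]
    · rw [contract_comp_succAbove_self hI, Derivation.map_smul,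
        neg_one_pow_smul_neg_one_pow_smul]
    · intro a _ hab
      obtain ⟨c, hc⟩ := Fin.exists_succAbove_eq hab.symm
      rw [contract_of_mem ⟨c, congrArg I hc⟩, map_zero, smul_zero]
    · exact fun h => absurd (Finset.mem_univ b) h
  · set P := insertPos j I
    have hclosed := hω (insertSorted j I) (strictMono_insertSorted hI hj)
    rw [extDeriv, Fin.sum_univ_succAbove _ P, insertSorted_apply_insertPos] at hclosed
    have hterm : ∀ a : Fin (n + 1),
        ((-1 : R) ^ (a : ℕ)) • pderiv (I a) (contract ω j (I ∘ a.succAbove)) =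
          -(-1 : R) ^ (P : ℕ) • ((-1 : R) ^ (P.succAbove a : ℕ) •
            pderiv (insertSorted j I (P.succAbove a))
              (ω (insertSorted j I ∘ (P.succAbove a).succAbove))) := by
      intro a
      rw [contract_of_notMem (Fin.notMem_range_comp_succAbove hj a),
        insertSorted_comp_succAbove hI hj, insertSorted_apply_succAbove, Derivation.map_smul,
        smul_smul, smul_smul, ← pow_add, neg_mul, ← pow_add,
        ← val_add_insertPos_comp_succAbove hI hj a, pow_succ, mul_neg_one, neg_neg]
    have hP : insertSorted j I ∘ P.succAbove = I := funext (insertSorted_apply_succAbove j I)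
    rw [extDeriv, Finset.sum_congr rfl fun a _ => hterm a, ← Finset.smul_sum,
      eq_neg_of_add_eq_zero_right hclosed, hP, smul_neg, neg_smul, neg_neg,
      neg_one_pow_smul_neg_one_pow_smul]

/-- `ι_E ω` for the Euler field `E = ∑ⱼ xⱼ ∂ⱼ`. -/
noncomputable def eulerContract (ω : PolyForm R p (n + 1)) : PolyForm R p n := fun K =>
  ∑ j, X j * contract ω j K

lemma isHomogeneous_eulerContract {d : ℕ}
    (hω : ∀ I, StrictMono I → (ω I).IsHomogeneous d) {K : Fin n → Fin p} (hK : StrictMono K) :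
    (eulerContract ω K).IsHomogeneous (d + 1) := by
  refine IsHomogeneous.sum _ _ _ fun j _ => ?_
  rw [add_comm]
  refine (isHomogeneous_X R j).mul ?_
  by_cases hj : j ∈ Set.range K
  · rw [contract_of_mem hj]
    exact isHomogeneous_zero _ _ _
  · rw [contract_of_notMem hj, smul_eq_C_mul]
    exact (hω _ (strictMono_insertSorted hK hj)).C_mul _

lemma extDeriv_eulerContract {d : ℕ} (hω : IsClosedForm ω)
    (hhom : ∀ I, StrictMono I → (ω I).IsHomogeneous d) {I : Fin (n + 1) → Fin p}
    (hI : StrictMono I) : extDeriv (eulerContract ω) I = (d + n + 1) • ω I := by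
  have hpderiv : ∀ a : Fin (n + 1), pderiv (I a) (eulerContract ω (I ∘ a.succAbove)) =
      contract ω (I a) (I ∘ a.succAbove) +
        ∑ j, X j * pderiv (I a) (contract ω j (I ∘ a.succAbove)) := by
    intro a
    simp only [eulerContract, map_sum, Derivation.leibniz, smul_eq_mul, pderiv_X,
      Pi.single_apply, Finset.sum_add_distrib, mul_ite, mul_one, mul_zero,
      Finset.sum_ite_eq', Finset.mem_univ, if_true, add_comm]
  have hcontract : ∑ a : Fin (n + 1), ((-1 : R) ^ (a : ℕ)) •
      contract ω (I a) (I ∘ a.succAbove) = (n + 1) • ω I := by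
    simp only [contract_comp_succAbove_self hI, neg_one_pow_smul_neg_one_pow_smul,
      Finset.sum_const, Finset.card_univ, Fintype.card_fin]
  calc extDeriv (eulerContract ω) I
      = (n + 1) • ω I + ∑ j, X j * extDeriv (contract ω j) I := by
        simp only [extDeriv, hpderiv, smul_add, Finset.sum_add_distrib, hcontract,
          Finset.smul_sum, Finset.mul_sum, mul_smul_comm]
        rw [Finset.sum_comm]
    _ = (n + 1) • ω I + ∑ j, X j * pderiv j (ω I) := by
        simp only [extDeriv_contract hω hI]
    _ = (d + n + 1) • ω I := by
        rw [(hhom I hI).sum_X_mul_pderiv, ← add_nsmul]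
        congr 1
        omega

section Field

variable {𝕜 : Type*} [Field 𝕜] {p n : ℕ}

noncomputable def homotopy (m : ℕ) (ω : PolyForm 𝕜 p (n + 1)) : PolyForm 𝕜 p n := fun K =>
  ∑ d ∈ range (m + 1),
    ((d + n + 1 : ℕ) : 𝕜)⁻¹ • eulerContract (fun I => homogeneousComponent d (ω I)) K

lemma totalDegree_homotopy_le (m : ℕ) (ω : PolyForm 𝕜 p (n + 1)) {K : Fin n → Fin p}
    (hK : StrictMono K) : (homotopy m ω K).totalDegree ≤ m + 1 := by
  refine (totalDegree_finsetSum _ _).trans (Finset.sup_le fun d hd => ?_)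
  have hdeg := (isHomogeneous_eulerContract
    (fun I _ => homogeneousComponent_isHomogeneous d (ω I)) hK).totalDegree_le
  have := Finset.mem_range.mp hd
  exact (totalDegree_smul_le _ _).trans (by omega)

lemma extDeriv_homotopy [CharZero 𝕜] {m : ℕ} {ω : PolyForm 𝕜 p (n + 1)}
    (hω : IsClosedForm ω) {I : Fin (n + 1) → Fin p} (hI : StrictMono I)
    (hdeg : (ω I).totalDegree ≤ m) :
    extDeriv (homotopy m ω) I = ω I := by
  unfold homotopy
  rw [extDeriv_sum_smul]
  calc ∑ d ∈ range (m + 1), ((d + n + 1 : ℕ) : 𝕜)⁻¹ •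
        extDeriv (eulerContract fun I => homogeneousComponent d (ω I)) I
      = ∑ d ∈ range (m + 1), homogeneousComponent d (ω I) := by
        refine Finset.sum_congr rfl fun d _ => ?_
        rw [extDeriv_eulerContract (hω.homogeneousComponent d)
          (fun I _ => homogeneousComponent_isHomogeneous d (ω I)) hI,
          ← Nat.cast_smul_eq_nsmul 𝕜, smul_smul,
          inv_mul_cancel₀ (Nat.cast_ne_zero.mpr (Nat.succ_ne_zero _)), one_smul]
    _ = ω I := sum_homogeneousComponent_of_totalDegree_le hdeg

end Field

end PolynomialForm

open PolynomialForm in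
theorem stmt_0_general (p m l₀ : ℕ)
    (f : (Fin (l₀ + 1) → Fin p) → MvPolynomial (Fin p) ℂ)
    (hdeg : ∀ I : Fin (l₀ + 1) → Fin p, StrictMono I → (f I).totalDegree ≤ m)
    (hclosed : ∀ J : Fin (l₀ + 2) → Fin p, StrictMono J →
      ∑ a : Fin (l₀ + 2), ((-1 : ℂ) ^ (a : ℕ)) •
        MvPolynomial.pderiv (J a) (f (J ∘ a.succAbove)) = 0) :
    ∃ g : (Fin l₀ → Fin p) → MvPolynomial (Fin p) ℂ,
      (∀ K : Fin l₀ → Fin p, StrictMono K → (g K).totalDegree ≤ m + 1) ∧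
      ∀ I : Fin (l₀ + 1) → Fin p, StrictMono I →
        f I = ∑ a : Fin (l₀ + 1), ((-1 : ℂ) ^ (a : ℕ)) •
          MvPolynomial.pderiv (I a) (g (I ∘ a.succAbove)) :=
  ⟨homotopy m f, fun _ hK => totalDegree_homotopy_le m f hK,
    fun I hI => (extDeriv_homotopy hclosed hI (hdeg I hI)).symm⟩

/-- Poincaré lemma for forms with polynomial coefficients.
An `l`-form (`l = l₀ + 1 ≥ 1`) with polynomial coefficients is a family
`f I` of complex polynomials indexed by strictly increasing `l`-tuples
`I : Fin l → Fin p`.  If it is closed (alternating sum of partial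
derivatives over all strictly increasing `(l+1)`-tuples vanishes) and
`deg f_I ≤ m`, then there is an `(l-1)`-form `g` with `deg g_K ≤ m + 1`
and `f_I = Σ_a (-1)^a ∂_{I a} g_{I \ I a}` for all strictly increasing `I`. -/
theorem stmt_0 (p m l₀ : ℕ) (hp : 1 ≤ p)
    (f : (Fin (l₀ + 1) → Fin p) → MvPolynomial (Fin p) ℂ)
    (hdeg : ∀ I : Fin (l₀ + 1) → Fin p, StrictMono I → (f I).totalDegree ≤ m)
    (hclosed : ∀ J : Fin (l₀ + 2) → Fin p, StrictMono J →
      ∑ a : Fin (l₀ + 2), ((-1 : ℂ) ^ (a : ℕ)) •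
        MvPolynomial.pderiv (J a) (f (J ∘ a.succAbove)) = 0) :
    ∃ g : (Fin l₀ → Fin p) → MvPolynomial (Fin p) ℂ,
      (∀ K : Fin l₀ → Fin p, StrictMono K → (g K).totalDegree ≤ m + 1) ∧
      ∀ I : Fin (l₀ + 1) → Fin p, StrictMono I →
        f I = ∑ a : Fin (l₀ + 1), ((-1 : ℂ) ^ (a : ℕ)) •
          MvPolynomial.pderiv (I a) (g (I ∘ a.succAbove)) :=
  stmt_0_general p m l₀ f hdeg hclosed
end

section
/- Let a ∈ C^∞(ℝ^n × ℝ^n × Γ; ℂ) vanish whenever x ∉ K, and suppose that for all multi-indices α ∈ ℕ^n (in ξ), β ∈ ℕ^q (in μ) and every compact L ⊆ Γ there is a constant C with |∂_ξ^α ∂_μ^β a(x,ξ,μ)| ≤ C (1+|ξ|²+|μ|²)^{(m−|α|−|β|)/2} for all x ∈ K, ξ ∈ ℝ^n and μ ∈ L^c. Then F(μ) := ∫_{ℝ^n} ∫_{ℝ^n} a(x,ξ,μ) dx dξ converges absolutely for every μ ∈ Γ, F is a smooth function on Γ, and for every multi-index β ∈ ℕ^q and every compact L ⊆ Γ there is a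 constant C' with |∂^β F(μ)| ≤ C' (1+|μ|)^{m+n−|β|} for all μ ∈ L^c. -/
/-!
Write `F(μ) = ∫∫ a(x, ξ, μ)` as one integral over `(ξ, x) ∈ ℝⁿ × ℝⁿ`. Near a point `μ₀ ∈ Γ` the
symbol estimate on a small closed ball around `μ₀` (with `t = 1`) dominates every `μ`-derivative
of the integrand by `C (1 + |ξ|²)^((m - k)/2) 1_K(x)`, which is integrable because `m + n < 0`.
Differentiating under the integral sign therefore shows that `F` is smooth with
`∂^k F = ∫∫ ∂^k_μ a`. On `L^c` the estimate bounds `|∂^k F(μ)|` by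
`C vol(K) ∫ (1 + |ξ|² + |μ|²)^((m - k)/2) dξ`; the substitution `ξ = (1 + |μ|²)^(1/2) η` turns
this into a constant times `(1 + |μ|²)^((m - k + n)/2) ≤ 2^((k - m - n)/2) (1 + |μ|)^(m + n - k)`.
-/

open MeasureTheory Set Filter Topology Module
open scoped Pointwise

namespace ContinuousMultilinearMap

variable {α Q V : Type*} [MeasurableSpace α] {μ : Measure α}
  [NormedAddCommGroup Q] [NormedSpace ℝ Q] [NormedAddCommGroup V] [NormedSpace ℝ V]

theorem integral_curry0 (p : α → Q [×0]→L[ℝ] V) :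
    ∫ z, (p z).curry0 ∂μ = (∫ z, p z ∂μ).curry0 :=
  ContinuousLinearEquiv.integral_comp_comm (F := V)
    (continuousMultilinearCurryFin0 ℝ Q V).toContinuousLinearEquiv p

theorem integral_curryLeft {j : ℕ} (p : α → Q [×j + 1]→L[ℝ] V) :
    ∫ z, (p z).curryLeft ∂μ = (∫ z, p z ∂μ).curryLeft :=
  ContinuousLinearEquiv.integral_comp_comm (𝕜 := ℝ) (E := Q [×j + 1]→L[ℝ] V)
    (F := Q →L[ℝ] Q [×j]→L[ℝ] V)
    (continuousMultilinearCurryLeftEquiv ℝ (fun _ : Fin (j + 1) => Q) V).toContinuousLinearEquiv p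

end ContinuousMultilinearMap

section ParametricIntegral

variable {α Q V : Type*} [MeasurableSpace α] {μ : Measure α}
  [NormedAddCommGroup Q] [NormedSpace ℝ Q] [NormedAddCommGroup V] [NormedSpace ℝ V]
  {h : α → Q → V} {Γ : Set Q}

def IteratedFDerivWithinDominated (μ : Measure α) (h : α → Q → V) (Γ : Set Q) : Prop :=
  ∀ (j : ℕ), ∀ y₀ ∈ Γ, ∃ s ∈ 𝓝 y₀, ∃ bound : α → ℝ, Integrable bound μ ∧
    ∀ᵐ z ∂μ, ∀ y ∈ s, ‖iteratedFDerivWithin ℝ j (h z) Γ y‖ ≤ bound z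

namespace IteratedFDerivWithinDominated

theorem integrable_iteratedFDerivWithin (hdom : IteratedFDerivWithinDominated μ h Γ) {j : ℕ}
    {y : Q} (hy : y ∈ Γ)
    (hmeas : AEStronglyMeasurable (fun z => iteratedFDerivWithin ℝ j (h z) Γ y) μ) :
    Integrable (fun z => iteratedFDerivWithin ℝ j (h z) Γ y) μ := by
  obtain ⟨s, hs, bound, hbound, hle⟩ := hdom j y hy
  exact hbound.mono' hmeas (hle.mono fun z hz => hz y (mem_of_mem_nhds hs))

theorem integrable (hdom : IteratedFDerivWithinDominated μ h Γ) {y : Q} (hy : y ∈ Γ)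
    (hmeas : AEStronglyMeasurable (fun z => h z y) μ) : Integrable (fun z => h z y) μ := by
  obtain ⟨s, hs, bound, hbound, hle⟩ := hdom 0 y hy
  refine hbound.mono' hmeas (hle.mono fun z hz => ?_)
  simpa only [norm_iteratedFDerivWithin_zero] using hz y (mem_of_mem_nhds hs)

theorem hasFDerivAt_integral_iteratedFDerivWithin (hdom : IteratedFDerivWithinDominated μ h Γ)
    (hΓ : IsOpen Γ) (hh : ∀ z, ContDiffOn ℝ (⊤ : ℕ∞) (h z) Γ)
    (hmeas : ∀ (j : ℕ), ∀ y ∈ Γ,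
      AEStronglyMeasurable (fun z => iteratedFDerivWithin ℝ j (h z) Γ y) μ)
    (j : ℕ) {y : Q} (hy : y ∈ Γ) :
    HasFDerivAt (fun y => ∫ z, iteratedFDerivWithin ℝ j (h z) Γ y ∂μ)
      (∫ z, iteratedFDerivWithin ℝ (j + 1) (h z) Γ y ∂μ).curryLeft y := by
  obtain ⟨s, hs, bound, hbound, hle⟩ := hdom (j + 1) y hy
  rw [← ContinuousMultilinearMap.integral_curryLeft]
  refine hasFDerivAt_integral_of_dominated_of_fderiv_le (inter_mem hs (hΓ.mem_nhds hy))
    (F' := fun y z => fderivWithin ℝ (iteratedFDerivWithin ℝ j (h z) Γ) Γ y)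
    (eventually_of_mem (hΓ.mem_nhds hy) fun y hy => hmeas j y hy)
    (hdom.integrable_iteratedFDerivWithin hy (hmeas j y hy)) ?_ ?_ hbound ?_
  · simp only [fderivWithin_iteratedFDerivWithin, Function.comp_apply]
    exact (continuousMultilinearCurryLeftEquiv ℝ (fun _ : Fin (j + 1) => Q) V).continuous
      |>.comp_aestronglyMeasurable (hmeas (j + 1) y hy)
  · filter_upwards [hle] with z hz y' hy'
    rw [norm_fderivWithin_iteratedFDerivWithin]
    exact hz y' hy'.1
  · refine ae_of_all _ fun z y' hy' => ?_
    have hdiff := (hh z).differentiableOn_iteratedFDerivWithin (m := j)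
      (by exact_mod_cast WithTop.coe_lt_top _) hΓ.uniqueDiffOn y' hy'.2
    exact ((hdiff.differentiableAt (hΓ.mem_nhds hy'.2)).hasFDerivAt).congr_fderiv
      (fderivWithin_of_isOpen hΓ hy'.2).symm

theorem hasFTaylorSeriesUpToOn_integral (hdom : IteratedFDerivWithinDominated μ h Γ)
    (hΓ : IsOpen Γ) (hh : ∀ z, ContDiffOn ℝ (⊤ : ℕ∞) (h z) Γ)
    (hmeas : ∀ (j : ℕ), ∀ y ∈ Γ,
      AEStronglyMeasurable (fun z => iteratedFDerivWithin ℝ j (h z) Γ y) μ) :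
    HasFTaylorSeriesUpToOn (⊤ : ℕ∞) (fun y => ∫ z, h z y ∂μ)
      (fun y j => ∫ z, iteratedFDerivWithin ℝ j (h z) Γ y ∂μ) Γ where
  zero_eq y _ := by
    rw [← ContinuousMultilinearMap.integral_curry0]
    simp
  fderivWithin j _ _ hy :=
    (hdom.hasFDerivAt_integral_iteratedFDerivWithin hΓ hh hmeas j hy).hasFDerivWithinAt
  cont j _ _ hy := (hdom.hasFDerivAt_integral_iteratedFDerivWithin hΓ hh hmeas j hy)
    |>.continuousAt.continuousWithinAt

theorem contDiffOn_integral (hdom : IteratedFDerivWithinDominated μ h Γ)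
    (hΓ : IsOpen Γ) (hh : ∀ z, ContDiffOn ℝ (⊤ : ℕ∞) (h z) Γ)
    (hmeas : ∀ (j : ℕ), ∀ y ∈ Γ,
      AEStronglyMeasurable (fun z => iteratedFDerivWithin ℝ j (h z) Γ y) μ) :
    ContDiffOn ℝ (⊤ : ℕ∞) (fun y => ∫ z, h z y ∂μ) Γ :=
  (hdom.hasFTaylorSeriesUpToOn_integral hΓ hh hmeas).contDiffOn

theorem iteratedFDerivWithin_integral (hdom : IteratedFDerivWithinDominated μ h Γ)
    (hΓ : IsOpen Γ) (hh : ∀ z, ContDiffOn ℝ (⊤ : ℕ∞) (h z) Γ)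
    (hmeas : ∀ (j : ℕ), ∀ y ∈ Γ,
      AEStronglyMeasurable (fun z => iteratedFDerivWithin ℝ j (h z) Γ y) μ)
    (k : ℕ) {y : Q} (hy : y ∈ Γ) :
    iteratedFDerivWithin ℝ k (fun y => ∫ z, h z y ∂μ) Γ y =
      ∫ z, iteratedFDerivWithin ℝ k (h z) Γ y ∂μ :=
  ((hdom.hasFTaylorSeriesUpToOn_integral hΓ hh hmeas).eq_iteratedFDerivWithin_of_uniqueDiffOn
    (by exact_mod_cast le_top) hΓ.uniqueDiffOn hy).symm

end IteratedFDerivWithinDominated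

end ParametricIntegral

section Slice

variable {𝕜 E F V : Type*} [NontriviallyNormedField 𝕜] [NormedAddCommGroup E] [NormedSpace 𝕜 E]
  [NormedAddCommGroup F] [NormedSpace 𝕜 F] [NormedAddCommGroup V] [NormedSpace 𝕜 V]
  {f : E × F → V} {s : Set F} {n : WithTop ℕ∞} {k : ℕ}

theorem iteratedFDerivWithin_comp_prodMk_right (hs : UniqueDiffOn 𝕜 s)
    (hf : ContDiffOn 𝕜 n f (univ ×ˢ s)) (hk : k ≤ n) (x : E) {y : F} (hy : y ∈ s) :
    iteratedFDerivWithin 𝕜 k (fun y => f (x, y)) s y =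
      (iteratedFDerivWithin 𝕜 k f (univ ×ˢ s) (x, y)).compContinuousLinearMap
        fun _ => ContinuousLinearMap.inr 𝕜 E F := by
  set S : Set (E × F) := univ ×ˢ s
  have hS : UniqueDiffOn 𝕜 S := uniqueDiffOn_univ.prod hs
  have htrans : ((x, 0) : E × F) +ᵥ S = S := by
    ext ⟨a, b⟩
    simp [S, mem_vadd_set_iff_neg_vadd_mem]
  have hpre : ContinuousLinearMap.inr 𝕜 E F ⁻¹' S = s := by
    ext; simp [S]
  have hg : ContDiffOn 𝕜 n (fun w => f ((x, 0) + w)) S :=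
    hf.comp (contDiff_const.add contDiff_id).contDiffOn fun w hw => ⟨trivial, by simpa using hw.2⟩
  have key := (ContinuousLinearMap.inr 𝕜 E F).iteratedFDerivWithin_comp_right hg hS
    (by rwa [hpre]) (by simpa [S] using hy) hk
  rw [hpre, iteratedFDerivWithin_comp_add_left, htrans] at key
  simpa [Function.comp_def] using key

theorem norm_iteratedFDerivWithin_comp_prodMk_right_le (hs : UniqueDiffOn 𝕜 s)
    (hf : ContDiffOn 𝕜 n f (univ ×ˢ s)) (hk : k ≤ n) (x : E) {y : F} (hy : y ∈ s) :
    ‖iteratedFDerivWithin 𝕜 k (fun y => f (x, y)) s y‖ ≤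
      ‖iteratedFDerivWithin 𝕜 k f (univ ×ˢ s) (x, y)‖ := by
  rw [iteratedFDerivWithin_comp_prodMk_right hs hf hk x hy]
  refine (ContinuousMultilinearMap.norm_compContinuousLinearMap_le _ _).trans ?_
  exact mul_le_of_le_one_right (norm_nonneg _) <|
    Finset.prod_le_one (fun _ _ => norm_nonneg _) fun _ _ =>
      ContinuousLinearMap.norm_inr_le_one 𝕜 E F

theorem continuous_iteratedFDerivWithin_comp_prodMk_right (hs : UniqueDiffOn 𝕜 s)
    (hf : ContDiffOn 𝕜 n f (univ ×ˢ s)) (hk : k ≤ n) {y : F} (hy : y ∈ s) :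
    Continuous fun x => iteratedFDerivWithin 𝕜 k (fun y => f (x, y)) s y := by
  simp_rw [iteratedFDerivWithin_comp_prodMk_right hs hf hk _ hy]
  exact (ContinuousMultilinearMap.compContinuousLinearMapL _).continuous.comp <|
    (hf.continuousOn_iteratedFDerivWithin hk (uniqueDiffOn_univ.prod hs)).comp_continuous
      (continuous_id.prodMk continuous_const) fun _ => ⟨trivial, hy⟩

end Slice

theorem one_add_sq_rpow_half_le {r t : ℝ} (hr : 0 ≤ r) (ht : t ≤ 0) :
    (1 + r ^ 2) ^ (t / 2) ≤ 2 ^ (-t / 2) * (1 + r) ^ t := by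
  have hsq : (1 + r) ^ 2 / 2 ≤ 1 + r ^ 2 := by nlinarith [sq_nonneg (1 - r)]
  calc (1 + r ^ 2) ^ (t / 2) ≤ ((1 + r) ^ 2 / 2) ^ (t / 2) :=
        Real.rpow_le_rpow_of_nonpos (by positivity) hsq (by linarith)
    _ = 2 ^ (-t / 2) * (1 + r) ^ t := by
        rw [Real.div_rpow (by positivity) (by norm_num), ← Real.rpow_natCast (1 + r) 2,
          ← Real.rpow_mul (by positivity), neg_div, Real.rpow_neg (by norm_num)]
        ring_nf

section SymbolMajorant

variable {E X : Type*} [NormedAddCommGroup E] {K : Set X} {C r : ℝ}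

noncomputable def symbolMajorant (K : Set X) (C r R : ℝ) (z : E × X) : ℝ :=
  C * (1 + ‖z.1‖ ^ 2 + R ^ 2) ^ (r / 2) * K.indicator 1 z.2

theorem symbolMajorant_le_symbolMajorant_zero (hC : 0 ≤ C) (hr : r ≤ 0) (R : ℝ) (z : E × X) :
    symbolMajorant K C r R z ≤ symbolMajorant K C r 0 z := by
  have hweight : (1 + ‖z.1‖ ^ 2 + R ^ 2) ^ (r / 2) ≤ (1 + ‖z.1‖ ^ 2 + 0 ^ 2) ^ (r / 2) :=
    Real.rpow_le_rpow_of_nonpos (by positivity) (by nlinarith) (by linarith)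
  exact mul_le_mul_of_nonneg_right (mul_le_mul_of_nonneg_left hweight hC)
    (indicator_nonneg (fun _ _ => zero_le_one) _)

variable [NormedSpace ℝ E] [FiniteDimensional ℝ E] [MeasurableSpace E] [BorelSpace E]
  {μ : Measure E} [μ.IsAddHaarMeasure] [MeasurableSpace X] {ρ : Measure X}

theorem integrable_one_add_norm_sq_add_sq_rpow (hr : finrank ℝ E + r < 0) (R : ℝ) :
    Integrable (fun ξ : E => (1 + ‖ξ‖ ^ 2 + R ^ 2) ^ (r / 2)) μ := by
  have hint : Integrable (fun ξ : E => (1 + ‖ξ‖ ^ 2) ^ (r / 2)) μ := by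
    simpa using integrable_rpow_neg_one_add_norm_sq (μ := μ) (r := -r) (by linarith)
  refine hint.mono' (Measurable.aestronglyMeasurable (by fun_prop)) (ae_of_all _ fun ξ => ?_)
  rw [Real.norm_of_nonneg (by positivity)]
  exact Real.rpow_le_rpow_of_nonpos (by positivity) (by nlinarith)
    (by linarith [(finrank ℝ E).cast_nonneg (α := ℝ)])

theorem integral_one_add_norm_sq_add_sq_rpow (r R : ℝ) :
    ∫ ξ : E, (1 + ‖ξ‖ ^ 2 + R ^ 2) ^ (r / 2) ∂μ =
      (1 + R ^ 2) ^ ((r + finrank ℝ E) / 2) * ∫ ξ : E, (1 + ‖ξ‖ ^ 2) ^ (r / 2) ∂μ := by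
  have h1R : 0 < 1 + R ^ 2 := by positivity
  set c := Real.sqrt (1 + R ^ 2)
  have hc : 0 < c := Real.sqrt_pos.2 h1R
  have hscale : ∀ ξ : E, (1 + ‖c • ξ‖ ^ 2 + R ^ 2) ^ (r / 2) =
      (1 + R ^ 2) ^ (r / 2) * (1 + ‖ξ‖ ^ 2) ^ (r / 2) := fun ξ => by
    rw [norm_smul, Real.norm_of_nonneg hc.le, mul_pow, Real.sq_sqrt h1R.le,
      ← Real.mul_rpow h1R.le (by positivity)]
    ring_nf
  have key := μ.integral_comp_smul (fun ξ : E => (1 + ‖ξ‖ ^ 2 + R ^ 2) ^ (r / 2)) c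
  simp only [hscale, integral_const_mul, smul_eq_mul] at key
  have hcd : c ^ finrank ℝ E = (1 + R ^ 2) ^ ((finrank ℝ E : ℝ) / 2) := by
    rw [show c = (1 + R ^ 2) ^ (1 / 2 : ℝ) from Real.sqrt_eq_rpow _, ← Real.rpow_natCast,
      ← Real.rpow_mul h1R.le]
    ring_nf
  rw [abs_of_pos (by positivity), hcd] at key
  rw [add_div, Real.rpow_add h1R, mul_right_comm, key, mul_comm,
    mul_inv_cancel_left₀ (by positivity)]

theorem integrable_symbolMajorant (hr : finrank ℝ E + r < 0) (hK : MeasurableSet K)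
    (hKρ : ρ K ≠ ⊤) (C R : ℝ) : Integrable (symbolMajorant K C r R) (μ.prod ρ) :=
  ((integrable_one_add_norm_sq_add_sq_rpow hr R).const_mul C).mul_prod
    ((integrable_indicator_iff hK).2 (integrableOn_const hKρ))

theorem integral_symbolMajorant [SFinite ρ] (hK : MeasurableSet K) (C r R : ℝ) :
    ∫ z, symbolMajorant K C r R z ∂(μ.prod ρ) =
      C * (1 + R ^ 2) ^ ((r + finrank ℝ E) / 2) * (∫ ξ : E, (1 + ‖ξ‖ ^ 2) ^ (r / 2) ∂μ) *
        ρ.real K := by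
  simp only [symbolMajorant]
  rw [integral_prod_mul (fun ξ : E => C * (1 + ‖ξ‖ ^ 2 + R ^ 2) ^ (r / 2)) (K.indicator 1),
    integral_const_mul,
    integral_one_add_norm_sq_add_sq_rpow, integral_indicator_one hK]
  ring

theorem exists_integral_symbolMajorant_le [SFinite ρ] (hK : MeasurableSet K) (hC : 0 ≤ C)
    (hr : r + finrank ℝ E ≤ 0) :
    ∃ C' : ℝ, ∀ R : ℝ, 0 ≤ R →
      ∫ z, symbolMajorant K C r R z ∂(μ.prod ρ) ≤ C' * (1 + R) ^ (r + finrank ℝ E) := by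
  refine ⟨C * (∫ ξ : E, (1 + ‖ξ‖ ^ 2) ^ (r / 2) ∂μ) * ρ.real K * 2 ^ (-(r + finrank ℝ E) / 2),
    fun R hR => ?_⟩
  have hI : 0 ≤ ∫ ξ : E, (1 + ‖ξ‖ ^ 2) ^ (r / 2) ∂μ := integral_nonneg fun _ => by positivity
  rw [integral_symbolMajorant hK]
  calc C * (1 + R ^ 2) ^ ((r + finrank ℝ E) / 2) * (∫ ξ : E, (1 + ‖ξ‖ ^ 2) ^ (r / 2) ∂μ) *
        ρ.real K
      ≤ C * (2 ^ (-(r + finrank ℝ E) / 2) * (1 + R) ^ (r + finrank ℝ E)) *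
        (∫ ξ : E, (1 + ‖ξ‖ ^ 2) ^ (r / 2) ∂μ) * ρ.real K := by
        gcongr
        exact one_add_sq_rpow_half_le hR hr
    _ = _ := by ring

end SymbolMajorant

section Symbol

variable {E X Q V : Type*} [NormedAddCommGroup E] [NormedSpace ℝ E] [NormedAddCommGroup Q]
  [NormedSpace ℝ Q] [NormedAddCommGroup V] [NormedSpace ℝ V] {Γ : Set Q} {K : Set X} {m : ℝ}

def HasSymbolMajorant (h : E × X → Q → V) (Γ : Set Q) (K : Set X) (m : ℝ) : Prop :=
  ∀ (k : ℕ) (L : Set Q), L ⊆ Γ → IsCompact L → ∃ C : ℝ, 0 ≤ C ∧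
    ∀ (z : E × X), ∀ y ∈ L, ∀ t : ℝ, 1 ≤ t →
      ‖iteratedFDerivWithin ℝ k (h z) Γ (t • y)‖ ≤ symbolMajorant K C (m - k) ‖t • y‖ z

theorem hasSymbolMajorant_of_forall_norm_iteratedFDerivWithin_le {a : X → E × Q → V}
    (hΓ : IsOpen Γ) (hΓcone : ∀ y ∈ Γ, ∀ t : ℝ, 0 < t → t • y ∈ Γ)
    (ha : ∀ x, ContDiffOn ℝ (⊤ : ℕ∞) (a x) (univ ×ˢ Γ)) (ha_supp : ∀ x ∉ K, ∀ ξy, a x ξy = 0)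
    (ha_est : ∀ (k : ℕ) (L : Set Q), L ⊆ Γ → IsCompact L → ∃ C : ℝ, ∀ x ∈ K, ∀ ξ : E,
      ∀ y ∈ L, ∀ t : ℝ, 1 ≤ t →
        ‖iteratedFDerivWithin ℝ k (a x) (univ ×ˢ Γ) (ξ, t • y)‖
          ≤ C * (1 + ‖ξ‖ ^ 2 + ‖t • y‖ ^ 2) ^ ((m - k) / 2)) :
    HasSymbolMajorant (fun z y => a z.2 (z.1, y)) Γ K m := by
  intro k L hL hLc
  obtain ⟨C, hC⟩ := ha_est k L hL hLc
  refine ⟨max C 0, le_max_right _ _, fun z y hy t ht => ?_⟩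
  by_cases hx : z.2 ∈ K
  · simp only [symbolMajorant, indicator_of_mem hx, Pi.one_apply, mul_one]
    calc ‖iteratedFDerivWithin ℝ k (fun y => a z.2 (z.1, y)) Γ (t • y)‖
        ≤ ‖iteratedFDerivWithin ℝ k (a z.2) (univ ×ˢ Γ) (z.1, t • y)‖ :=
          norm_iteratedFDerivWithin_comp_prodMk_right_le hΓ.uniqueDiffOn (ha z.2)
            (by exact_mod_cast le_top) z.1 (hΓcone y (hL hy) t (by linarith))
      _ ≤ C * (1 + ‖z.1‖ ^ 2 + ‖t • y‖ ^ 2) ^ ((m - k) / 2) := hC z.2 hx z.1 y hy t ht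
      _ ≤ max C 0 * (1 + ‖z.1‖ ^ 2 + ‖t • y‖ ^ 2) ^ ((m - k) / 2) := by
          gcongr
          exact le_max_left _ _
  · have hzero : (fun y => a z.2 (z.1, y)) = 0 := funext fun y => ha_supp z.2 hx _
    simp [hzero, symbolMajorant, hx]

theorem contDiffOn_symbol_integrand [NormedAddCommGroup X] [NormedSpace ℝ X] {n : WithTop ℕ∞}
    {a : X → E × Q → V}
    (ha : ContDiffOn ℝ n (fun z : X × (E × Q) => a z.1 z.2) (univ ×ˢ univ ×ˢ Γ)) :
    ContDiffOn ℝ n (fun w : (E × X) × Q => a w.1.2 (w.1.1, w.2)) (univ ×ˢ Γ) :=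
  ha.comp (f := fun w : (E × X) × Q => (w.1.2, (w.1.1, w.2))) (by fun_prop)
    fun _ hw => ⟨trivial, trivial, hw.2⟩

namespace HasSymbolMajorant

variable [FiniteDimensional ℝ E] [MeasurableSpace E] [BorelSpace E] {μ : Measure E}
  [μ.IsAddHaarMeasure] [MeasurableSpace X] {ρ : Measure X} {h : E × X → Q → V}

theorem iteratedFDerivWithinDominated [ProperSpace Q] (hsymb : HasSymbolMajorant h Γ K m)
    (hΓ : IsOpen Γ) (hK : MeasurableSet K) (hKρ : ρ K ≠ ⊤) (hm : m + finrank ℝ E < 0) :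
    IteratedFDerivWithinDominated (μ.prod ρ) h Γ := by
  intro j y₀ hy₀
  obtain ⟨ε, hε, hball⟩ := Metric.isOpen_iff.1 hΓ y₀ hy₀
  obtain ⟨C, hC0, hC⟩ := hsymb j (Metric.closedBall y₀ (ε / 2))
    ((Metric.closedBall_subset_ball (by linarith)).trans hball) (isCompact_closedBall _ _)
  have hj : (0 : ℝ) ≤ j := j.cast_nonneg
  refine ⟨Metric.closedBall y₀ (ε / 2), Metric.closedBall_mem_nhds _ (by positivity),
    symbolMajorant K C (m - j) 0, integrable_symbolMajorant (by linarith) hK hKρ C 0,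
    ae_of_all _ fun z y hy => ?_⟩
  calc ‖iteratedFDerivWithin ℝ j (h z) Γ y‖ ≤ symbolMajorant K C (m - j) ‖y‖ z := by
        simpa using hC z y hy 1 le_rfl
    _ ≤ symbolMajorant K C (m - j) 0 z :=
        symbolMajorant_le_symbolMajorant_zero hC0 (by linarith) _ _

theorem exists_norm_iteratedFDerivWithin_integral_le [SFinite ρ]
    (hsymb : HasSymbolMajorant h Γ K m) (hdom : IteratedFDerivWithinDominated (μ.prod ρ) h Γ)
    (hΓ : IsOpen Γ) (hΓcone : ∀ y ∈ Γ, ∀ t : ℝ, 0 < t → t • y ∈ Γ)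
    (hK : MeasurableSet K) (hKρ : ρ K ≠ ⊤) (hm : m + finrank ℝ E < 0)
    (hh : ∀ z, ContDiffOn ℝ (⊤ : ℕ∞) (h z) Γ)
    (hmeas : ∀ (j : ℕ), ∀ y ∈ Γ,
      AEStronglyMeasurable (fun z => iteratedFDerivWithin ℝ j (h z) Γ y) (μ.prod ρ))
    (k : ℕ) {L : Set Q} (hL : L ⊆ Γ) (hLc : IsCompact L) :
    ∃ C' : ℝ, ∀ y ∈ L, ∀ t : ℝ, 1 ≤ t →
      ‖iteratedFDerivWithin ℝ k (fun y => ∫ z, h z y ∂(μ.prod ρ)) Γ (t • y)‖ ≤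
        C' * (1 + ‖t • y‖) ^ (m - k + finrank ℝ E) := by
  have hk : (0 : ℝ) ≤ k := k.cast_nonneg
  obtain ⟨C, hC0, hC⟩ := hsymb k L hL hLc
  obtain ⟨C', hC'⟩ := exists_integral_symbolMajorant_le (μ := μ) (ρ := ρ) hK hC0 (r := m - k)
    (by linarith)
  refine ⟨C', fun y hy t ht => ?_⟩
  rw [hdom.iteratedFDerivWithin_integral hΓ hh hmeas k (hΓcone y (hL hy) t (by linarith))]
  calc _ ≤ ∫ z, symbolMajorant K C (m - k) ‖t • y‖ z ∂(μ.prod ρ) :=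
        norm_integral_le_of_norm_le (integrable_symbolMajorant (by linarith) hK hKρ C _)
          (ae_of_all _ fun z => hC z y hy t ht)
    _ ≤ _ := hC' _ (norm_nonneg _)

end HasSymbolMajorant

end Symbol

theorem stmt_5_general (n q : ℕ)
    (Γ : Set (EuclideanSpace ℝ (Fin q))) (hΓopen : IsOpen Γ)
    (hΓcone : ∀ μ ∈ Γ, ∀ t : ℝ, 0 < t → t • μ ∈ Γ)
    (K : Set (EuclideanSpace ℝ (Fin n))) (hK : IsCompact K)
    (m : ℝ) (hm : m + n < 0)
    (a : EuclideanSpace ℝ (Fin n) →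
      EuclideanSpace ℝ (Fin n) × EuclideanSpace ℝ (Fin q) → ℂ)
    (ha_smooth : ContDiffOn ℝ (⊤ : ℕ∞)
      (fun z : EuclideanSpace ℝ (Fin n) ×
        (EuclideanSpace ℝ (Fin n) × EuclideanSpace ℝ (Fin q)) => a z.1 z.2)
      (Set.univ ×ˢ Set.univ ×ˢ Γ))
    (ha_supp : ∀ x ∉ K, ∀ ξμ, a x ξμ = 0)
    (ha_est : ∀ (k : ℕ) (L : Set (EuclideanSpace ℝ (Fin q))), L ⊆ Γ →
      IsCompact L → ∃ C : ℝ, ∀ x ∈ K, ∀ ξ : EuclideanSpace ℝ (Fin n),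
        ∀ μ ∈ L, ∀ t : ℝ, 1 ≤ t →
          ‖iteratedFDerivWithin ℝ k (a x) (Set.univ ×ˢ Γ) (ξ, t • μ)‖
            ≤ C * (1 + ‖ξ‖ ^ 2 + ‖t • μ‖ ^ 2) ^ ((m - k) / 2))
    (F : EuclideanSpace ℝ (Fin q) → ℂ)
    (hF : F = fun μ => ∫ ξ : EuclideanSpace ℝ (Fin n),
      ∫ x : EuclideanSpace ℝ (Fin n), a x (ξ, μ)) :
    (∀ μ ∈ Γ, Integrable (fun z : EuclideanSpace ℝ (Fin n) ×
      EuclideanSpace ℝ (Fin n) => a z.2 (z.1, μ))) ∧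
    ContDiffOn ℝ (⊤ : ℕ∞) F Γ ∧
    (∀ (k : ℕ) (L : Set (EuclideanSpace ℝ (Fin q))), L ⊆ Γ → IsCompact L →
      ∃ C' : ℝ, ∀ μ ∈ L, ∀ t : ℝ, 1 ≤ t →
        ‖iteratedFDerivWithin ℝ k F Γ (t • μ)‖
          ≤ C' * (1 + ‖t • μ‖) ^ (m + n - k)) := by
  have hn : m + finrank ℝ (EuclideanSpace ℝ (Fin n)) < 0 := by rwa [finrank_euclideanSpace_fin]
  have hsmooth := contDiffOn_symbol_integrand ha_smooth
  have hA : ∀ z : EuclideanSpace ℝ (Fin n) × EuclideanSpace ℝ (Fin n),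
      ContDiffOn ℝ (⊤ : ℕ∞) (fun ν => a z.2 (z.1, ν)) Γ := fun z =>
    hsmooth.comp (f := fun ν => (z, ν)) (by fun_prop) fun _ hν => ⟨trivial, hν⟩
  have hmeas : ∀ (j : ℕ), ∀ ν ∈ Γ, AEStronglyMeasurable (fun z : EuclideanSpace ℝ (Fin n) ×
      EuclideanSpace ℝ (Fin n) => iteratedFDerivWithin ℝ j (fun ν => a z.2 (z.1, ν)) Γ ν) :=
    fun j ν hν => (continuous_iteratedFDerivWithin_comp_prodMk_right hΓopen.uniqueDiffOn hsmooth
      (by exact_mod_cast le_top) hν).aestronglyMeasurable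
  have hsymb := hasSymbolMajorant_of_forall_norm_iteratedFDerivWithin_le (a := a) hΓopen hΓcone
    (fun x => ha_smooth.comp (f := fun w => (x, w)) (by fun_prop) fun _ hw => ⟨trivial, hw⟩)
    ha_supp ha_est
  rw [Measure.volume_eq_prod] at hmeas ⊢
  have hdom := hsymb.iteratedFDerivWithinDominated (μ := volume) (ρ := volume) hΓopen
    hK.measurableSet hK.measure_lt_top.ne hn
  have hint : ∀ ν ∈ Γ, Integrable (fun z : EuclideanSpace ℝ (Fin n) ×
      EuclideanSpace ℝ (Fin n) => a z.2 (z.1, ν)) (volume.prod volume) := fun ν hν =>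
    hdom.integrable hν (hsmooth.continuousOn.comp_continuous (continuous_id.prodMk continuous_const)
      fun _ => ⟨trivial, hν⟩).aestronglyMeasurable
  have hFA : EqOn F (fun ν => ∫ z, a z.2 (z.1, ν) ∂(volume.prod volume)) Γ := fun ν hν => by
    simpa only [hF] using (integral_prod _ (hint ν hν)).symm
  refine ⟨hint, (hdom.contDiffOn_integral hΓopen hA hmeas).congr hFA, fun k L hL hLc => ?_⟩
  obtain ⟨C', hC'⟩ := hsymb.exists_norm_iteratedFDerivWithin_integral_le hdom hΓopen hΓcone
    hK.measurableSet hK.measure_lt_top.ne hn hA hmeas k hL hLc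
  refine ⟨C', fun μ hμ t ht => ?_⟩
  rw [iteratedFDerivWithin_congr hFA (hΓcone μ (hL hμ) t (by linarith)), add_sub_right_comm]
  simpa only [finrank_euclideanSpace_fin] using hC' μ hμ t ht

/-- let `m + n < 0`, `K ⊆ ℝ^n` compact, `Γ ⊆ ℝ^q` an open cone,
and let `a(x,ξ,μ)` be smooth, vanishing for `x ∉ K`, with the parametric
symbol estimates `‖∂^k_{(ξ,μ)} a(x,ξ,μ)‖ ≤ C (1+|ξ|²+|μ|²)^{(m-k)/2}` for
`x ∈ K`, `ξ ∈ ℝ^n`, `μ ∈ L^c` (`L ⊆ Γ` compact).  Then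
`F(μ) = ∫∫ a(x,ξ,μ) dx dξ` converges absolutely, is smooth on `Γ`, and
satisfies `‖∂^k F(μ)‖ ≤ C' (1+|μ|)^{m+n-k}` on each `L^c`. -/
theorem stmt_5 (n q : ℕ) (hn : 1 ≤ n) (hq : 1 ≤ q)
    (Γ : Set (EuclideanSpace ℝ (Fin q))) (hΓopen : IsOpen Γ)
    (hΓne : Γ.Nonempty) (hΓcone : ∀ μ ∈ Γ, ∀ t : ℝ, 0 < t → t • μ ∈ Γ)
    (K : Set (EuclideanSpace ℝ (Fin n))) (hK : IsCompact K)
    (m : ℝ) (hm : m + n < 0)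
    (a : EuclideanSpace ℝ (Fin n) →
      EuclideanSpace ℝ (Fin n) × EuclideanSpace ℝ (Fin q) → ℂ)
    (ha_smooth : ContDiffOn ℝ (⊤ : ℕ∞)
      (fun z : EuclideanSpace ℝ (Fin n) ×
        (EuclideanSpace ℝ (Fin n) × EuclideanSpace ℝ (Fin q)) => a z.1 z.2)
      (Set.univ ×ˢ Set.univ ×ˢ Γ))
    (ha_supp : ∀ x ∉ K, ∀ ξμ, a x ξμ = 0)
    (ha_est : ∀ (k : ℕ) (L : Set (EuclideanSpace ℝ (Fin q))), L ⊆ Γ →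
      IsCompact L → ∃ C : ℝ, ∀ x ∈ K, ∀ ξ : EuclideanSpace ℝ (Fin n),
        ∀ μ ∈ L, ∀ t : ℝ, 1 ≤ t →
          ‖iteratedFDerivWithin ℝ k (a x) (Set.univ ×ˢ Γ) (ξ, t • μ)‖
            ≤ C * (1 + ‖ξ‖ ^ 2 + ‖t • μ‖ ^ 2) ^ ((m - k) / 2))
    (F : EuclideanSpace ℝ (Fin q) → ℂ)
    (hF : F = fun μ => ∫ ξ : EuclideanSpace ℝ (Fin n),
      ∫ x : EuclideanSpace ℝ (Fin n), a x (ξ, μ)) :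
    (∀ μ ∈ Γ, Integrable (fun z : EuclideanSpace ℝ (Fin n) ×
      EuclideanSpace ℝ (Fin n) => a z.2 (z.1, μ))) ∧
    ContDiffOn ℝ (⊤ : ℕ∞) F Γ ∧
    (∀ (k : ℕ) (L : Set (EuclideanSpace ℝ (Fin q))), L ⊆ Γ → IsCompact L →
      ∃ C' : ℝ, ∀ μ ∈ L, ∀ t : ℝ, 1 ≤ t →
        ‖iteratedFDerivWithin ℝ k F Γ (t • μ)‖
          ≤ C' * (1 + ‖t • μ‖) ^ (m + n - k)) :=
  stmt_5_general n q Γ hΓopen hΓcone K hK m hm a ha_smooth ha_supp ha_est F hF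
end

section
/- For x_0 ∈ ℝ and x' = (x'_1,…,x'_p) ∈ ℝ^p, set M := x_0·I − Σ_{i=1}^p x'_i E_i. Then for every j ∈ {1,…,p}, letting (i_1 < i_2 < … < i_{p−1}) be the increasing enumeration of {1,…,p}∖{j}: Σ_{σ ∈ S_{p−1}} sgn(σ) · tr( M² E_{i_{σ(1)}} M E_{i_{σ(2)}} M E_{i_{σ(3)}} ⋯ M E_{i_{σ(p−1)}} ) = (−1)^j x'_j · (x_0² + |x'|²)^{(p−1)/2} · (p−1)! · tr(E_1 E_2 ⋯ E_p). -/
open Matrix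

namespace Stmt11Aux

variable {p N : ℕ} (E : Fin p → Matrix (Fin N) (Fin N) ℂ)

/-- product of `E`'s along a list of indices -/
noncomputable def T (D : List (Fin p)) : Matrix (Fin N) (Fin N) ℂ := (D.map E).prod

/-- product of `E`'s along a tuple of indices -/
noncomputable def W {m : ℕ} (c : Fin m → Fin p) : Matrix (Fin N) (Fin N) ℂ := T E (List.ofFn c)

variable (hcliff : ∀ i j, E i * E j + E j * E i
      = if i = j then (-2 : ℂ) • (1 : Matrix (Fin N) (Fin N) ℂ) else 0)

section Basic
include hcliff

lemma hE2 (i : Fin p) : E i * E i = -1 := by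
  have h := hcliff i i
  rw [if_pos rfl] at h
  have h2 : (2:ℂ) • (E i * E i) = (2:ℂ) • (-1 : Matrix (Fin N) (Fin N) ℂ) := by
    rw [two_smul]
    rw [h]
    ext a b
    simp
  exact smul_right_injective _ (by norm_num) h2

lemma hanti {i j : Fin p} (h : i ≠ j) : E i * E j = -(E j * E i) := by
  have h' := hcliff i j
  rw [if_neg h] at h'
  linear_combination (norm := abel) h'

end Basic

lemma T_nil : T E ([] : List (Fin p)) = 1 := rfl

lemma T_cons (z : Fin p) (D : List (Fin p)) : T E (z :: D) = E z * T E D := by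
  simp [T]

lemma T_append (D₁ D₂ : List (Fin p)) : T E (D₁ ++ D₂) = T E D₁ * T E D₂ := by
  simp [T]

section WithCliff
include hcliff

/-- move a generator through a product of other generators -/
lemma pass {z : Fin p} {D : List (Fin p)} (h : z ∉ D) :
    E z * T E D = ((-1 : ℂ)) ^ D.length • (T E D * E z) := by
  induction D with
  | nil => simp [T_nil]
  | cons d D ih =>
    have hzd : z ≠ d := fun he => h (he ▸ List.mem_cons_self)
    have hD : z ∉ D := fun hm => h (List.mem_cons_of_mem _ hm)
    rw [T_cons, ← mul_assoc, hanti E hcliff hzd, neg_mul, mul_assoc, ih hD,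
      List.length_cons, mul_smul_comm, pow_succ, ← mul_assoc]
    rw [show ((-1:ℂ)) ^ D.length * -1 = -((-1:ℂ)) ^ D.length by ring, neg_smul]

omit hcliff in
lemma trace_anticomm {A B : Matrix (Fin N) (Fin N) ℂ} (h : A * B = -(B * A)) :
    (A * B).trace = 0 := by
  have h1 : (A * B).trace = (B * A).trace := Matrix.trace_mul_comm A B
  rw [h, trace_neg] at h1
  have h2 : (B * A).trace = (A * B).trace := Matrix.trace_mul_comm B A
  rw [h2] at h1
  linear_combination -h1 / 2

end WithCliff


omit hcliff in
lemma exists_not_mem {D : List (Fin p)} (h : D.length < p) : ∃ l : Fin p, l ∉ D := by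
  by_contra hc
  push_neg at hc
  have hsub : (Finset.univ : Finset (Fin p)) ⊆ D.toFinset := fun l _ => List.mem_toFinset.2 (hc l)
  have := Finset.card_le_card hsub
  simp only [Finset.card_univ, Fintype.card_fin] at this
  have := D.toFinset_card_le
  omega

section WithCliff2
include hcliff

lemma traceT0 {D : List (Fin p)} (hnd : D.Nodup) (hne : D ≠ []) (hlen : D.length < p) :
    (T E D).trace = 0 := by
  by_cases hpar : Even D.length
  · match D, hne with
    | d :: D', _ =>
      have hd : d ∉ D' := (List.nodup_cons.1 hnd).1
      have hodd : ¬ Even D'.length := by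
        simp only [List.length_cons] at hpar
        intro hcon; exact (Nat.even_add_one.mp hpar) hcon
      have key : E d * T E D' = -(T E D' * E d) := by
        rw [pass E hcliff hd, (Nat.not_even_iff_odd.1 hodd).neg_one_pow, neg_smul, one_smul]
      rw [T_cons]
      exact trace_anticomm key
  · obtain ⟨l, hl⟩ := exists_not_mem hlen
    have h1 : T E D * E l * E l = -(T E D) := by
      rw [mul_assoc, hE2 E hcliff, mul_neg_one]
    have c1 : (T E D).trace = -((T E D * E l * E l).trace) := by rw [h1, trace_neg, neg_neg]
    have c2 : (T E D * E l * E l).trace = (E l * (T E D * E l)).trace :=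
      Matrix.trace_mul_comm _ _
    have c3 : E l * (T E D * E l) = -(T E D * E l * E l) := by
      rw [← mul_assoc, pass E hcliff hl, (Nat.not_even_iff_odd.1 hpar).neg_one_pow,
        neg_smul, one_smul, neg_mul]
    have c4 : (T E D * E l * E l).trace = 0 := by
      have c5 := c2
      rw [c3, trace_neg] at c5
      linear_combination c5 / 2
    rw [c4, neg_zero] at c1
    exact c1

lemma traceET_mem {D : List (Fin p)} (hnd : D.Nodup) {i : Fin p} (hi : i ∈ D)
    (h2 : 2 ≤ D.length) : (E i * T E D).trace = 0 := by
  obtain ⟨D₁, D₂, rfl⟩ := List.append_of_mem hi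
  have hiD₁ : i ∉ D₁ := fun hm =>
    (List.disjoint_of_nodup_append hnd) hm List.mem_cons_self
  have hndrest : (D₁ ++ D₂).Nodup := by
    have hsub : (D₁ ++ D₂).Sublist (D₁ ++ i :: D₂) :=
      List.Sublist.append_left (List.sublist_cons_self i D₂) D₁
    exact hnd.sublist hsub
  have e1 : E i * T E (D₁ ++ i :: D₂) = ((-1:ℂ)) ^ D₁.length • (-(T E (D₁ ++ D₂))) := by
    rw [T_append, T_cons, ← mul_assoc, pass E hcliff hiD₁, smul_mul_assoc, T_append]
    congr 1
    rw [mul_assoc, ← mul_assoc (E i), hE2 E hcliff, neg_one_mul, mul_neg]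
  have hlen1 : 1 ≤ (D₁ ++ D₂).length := by
    simp only [List.length_append, List.length_cons] at h2 ⊢
    omega
  have hlenp : (D₁ ++ D₂).length < p := by
    have hle := hnd.length_le_card
    simp only [Fintype.card_fin, List.length_append, List.length_cons] at hle ⊢
    omega
  rw [e1, trace_smul, trace_neg,
    traceT0 E hcliff hndrest (by intro h; rw [h] at hlen1; simp at hlen1) hlenp,
    neg_zero, smul_zero]

end WithCliff2


omit hcliff in
lemma W_succ {m : ℕ} (c : Fin (m + 1) → Fin p) :
    W E c = E (c 0) * W E (fun a => c a.succ) := by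
  rw [W, List.ofFn_succ, T_cons]; rfl

omit hcliff in
lemma W_zero (c : Fin 0 → Fin p) : W E c = 1 := by
  rw [W, List.ofFn_zero, T_nil]

section WithCliff3
include hcliff

lemma front1 : ∀ {m : ℕ} (c : Fin (m + 1) → Fin p), Function.Injective c →
    ∀ (i : Fin (m + 1)),
    E (c i) * W E (c ∘ i.succAbove) = ((-1 : ℂ)) ^ (i : ℕ) • W E c := by
  intro m
  induction m with
  | zero =>
    intro c hc i
    have hi : i = 0 := Fin.fin_one_eq_zero i
    subst hi
    rw [W_zero, W_succ, W_zero, mul_one]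
    simp
  | succ m ih =>
    intro c hc i
    induction i using Fin.cases with
    | zero =>
      simp only [Fin.val_zero, pow_zero, one_smul, Fin.succAbove_zero]
      rw [W_succ E c]
      rfl
    | succ i' =>
      have hfun : (fun a : Fin m => (c ∘ (i'.succ).succAbove) a.succ)
          = ((fun a => c a.succ) ∘ i'.succAbove) := by
        funext a
        simp [Function.comp, Fin.succ_succAbove_succ]
      have hW : W E (c ∘ (i'.succ).succAbove)
          = E (c 0) * W E ((fun a => c a.succ) ∘ i'.succAbove) := by
        rw [W_succ E (c ∘ (i'.succ).succAbove), hfun]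
        congr 2
      have hc' : Function.Injective (fun a : Fin (m + 1) => c a.succ) :=
        fun a b hab => Fin.succ_injective _ (hc hab)
      have hne : c i'.succ ≠ c 0 := fun he => (Fin.succ_ne_zero i') (hc he)
      have hmid := ih (fun a => c a.succ) hc' i'
      rw [hW, ← mul_assoc, hanti E hcliff hne, neg_mul, mul_assoc, hmid,
        mul_smul_comm, ← W_succ, Fin.val_succ, pow_succ,
        show ((-1:ℂ)) ^ (i' : ℕ) * -1 = -((-1:ℂ)) ^ (i' : ℕ) by ring, neg_smul]

end WithCliff3

/-! ### the matrices `M`, `Mb` and scalar `r2` -/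

variable (x0 : ℂ) (x : Fin p → ℂ)

noncomputable def Vm : Matrix (Fin N) (Fin N) ℂ := ∑ i, x i • E i

noncomputable def Mm : Matrix (Fin N) (Fin N) ℂ := x0 • 1 - Vm E x

noncomputable def Mbm : Matrix (Fin N) (Fin N) ℂ := x0 • 1 + Vm E x

noncomputable def r2c : ℂ := x0 ^ 2 + ∑ i, (x i) ^ 2

omit hcliff in
lemma trace_M_mul (X : Matrix (Fin N) (Fin N) ℂ) :
    (Mm E x0 x * X).trace = x0 * X.trace - ∑ i, x i * (E i * X).trace := by
  rw [Mm, Vm, sub_mul, smul_mul_assoc, one_mul, Finset.sum_mul, trace_sub, trace_smul,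
    Matrix.trace_sum, smul_eq_mul]
  congr 1
  refine Finset.sum_congr rfl fun i _ => ?_
  rw [smul_mul_assoc, trace_smul, smul_eq_mul]

section WithCliff4
include hcliff

lemma VE (u : Fin p) : Vm E x * E u + E u * Vm E x = (-2 * x u) • 1 := by
  rw [Vm, Finset.sum_mul, Finset.mul_sum, ← Finset.sum_add_distrib]
  have h1 : ∀ i ∈ Finset.univ, x i • E i * E u + E u * (x i • E i)
      = if i = u then ((-2 : ℂ) * x u) • (1 : Matrix (Fin N) (Fin N) ℂ) else 0 := by
    intro i _
    rw [smul_mul_assoc, mul_smul_comm, ← smul_add, hcliff i u]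
    by_cases h : i = u
    · subst h; rw [if_pos rfl, if_pos rfl, smul_smul, mul_comm]
    · rw [if_neg h, if_neg h, smul_zero]
  rw [Finset.sum_congr rfl h1, Finset.sum_ite_eq' Finset.univ u]
  simp

lemma V2 : Vm E x * Vm E x = (-(∑ i, (x i) ^ 2)) • 1 := by
  have expand : Vm E x * Vm E x = ∑ i, ∑ l, (x i * x l) • (E i * E l) := by
    rw [Vm, Finset.sum_mul_sum]
    refine Finset.sum_congr rfl fun i _ => Finset.sum_congr rfl fun l _ => ?_
    rw [smul_mul_assoc, mul_smul_comm, smul_smul]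
  have expand2 : Vm E x * Vm E x = ∑ i, ∑ l, (x i * x l) • (E l * E i) := by
    rw [expand, Finset.sum_comm]
    refine Finset.sum_congr rfl fun i _ => Finset.sum_congr rfl fun l _ => ?_
    rw [mul_comm (x l) (x i)]
  have hsum : Vm E x * Vm E x + Vm E x * Vm E x
      = ∑ i, ∑ l, (x i * x l) • (E i * E l + E l * E i) := by
    nth_rewrite 1 [expand]
    nth_rewrite 1 [expand2]
    rw [← Finset.sum_add_distrib]
    refine Finset.sum_congr rfl fun i _ => ?_
    rw [← Finset.sum_add_distrib]
    refine Finset.sum_congr rfl fun l _ => ?_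
    rw [smul_add]
  have hval : ∑ i, ∑ l, (x i * x l) • (E i * E l + E l * E i)
      = ((-2 : ℂ) * ∑ i, (x i) ^ 2) • (1 : Matrix (Fin N) (Fin N) ℂ) := by
    have h1 : ∀ i ∈ Finset.univ, ∑ l, (x i * x l) • (E i * E l + E l * E i)
        = ((-2 : ℂ) * (x i) ^ 2) • (1 : Matrix (Fin N) (Fin N) ℂ) := by
      intro i _
      have h2 : ∀ l ∈ Finset.univ, (x i * x l) • (E i * E l + E l * E i)
          = if l = i then ((-2 : ℂ) * (x i) ^ 2) • (1 : Matrix (Fin N) (Fin N) ℂ) else 0 := by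
        intro l _
        rw [hcliff i l]
        by_cases h : i = l
        · subst h; rw [if_pos rfl, if_pos rfl, smul_smul]; ring_nf
        · rw [if_neg h, if_neg (Ne.symm h), smul_zero]
      rw [Finset.sum_congr rfl h2, Finset.sum_ite_eq' Finset.univ i]
      simp
    rw [Finset.sum_congr rfl h1, ← Finset.sum_smul, ← Finset.mul_sum]
  have h2 : (2 : ℂ) • (Vm E x * Vm E x)
      = (2 : ℂ) • ((-(∑ i, (x i) ^ 2)) • (1 : Matrix (Fin N) (Fin N) ℂ)) := by
    rw [two_smul, hsum, hval, smul_smul]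
    congr 1
    ring
  exact smul_right_injective _ (by norm_num : (2 : ℂ) ≠ 0) h2

lemma M_mul_E (u : Fin p) :
    Mm E x0 x * E u = E u * Mbm E x0 x + (2 * x u) • 1 := by
  have hV : Vm E x * E u = (-2 * x u) • 1 - E u * Vm E x := eq_sub_of_add_eq (VE E hcliff x u)
  rw [Mm, Mbm, sub_mul, mul_add, hV, smul_mul_assoc, one_mul, mul_smul_comm, mul_one]
  module

lemma E_mul_M (u : Fin p) :
    E u * Mm E x0 x = Mbm E x0 x * E u + (2 * x u) • 1 := by
  have hV : E u * Vm E x = (-2 * x u) • 1 - Vm E x * E u := eq_sub_of_add_eq' (VE E hcliff x u)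
  rw [Mm, Mbm, mul_sub, add_mul, hV, smul_mul_assoc, one_mul, mul_smul_comm, mul_one]
  module

lemma M_mul_Mb : Mm E x0 x * Mbm E x0 x = (r2c x0 x) • 1 := by
  simp only [Mm, Mbm, sub_mul, mul_add, mul_sub, add_mul, smul_mul_assoc, mul_smul_comm,
    one_mul, mul_one]
  rw [V2 E hcliff x, r2c]
  module

lemma Mb_mul_M : Mbm E x0 x * Mm E x0 x = (r2c x0 x) • 1 := by
  simp only [Mm, Mbm, sub_mul, mul_add, mul_sub, add_mul, smul_mul_assoc, mul_smul_comm,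
    one_mul, mul_one]
  rw [V2 E hcliff x, r2c]
  module

lemma MEM (z : Fin p) :
    Mm E x0 x * (E z * Mm E x0 x) = (r2c x0 x) • E z + (2 * x z) • Mm E x0 x := by
  rw [E_mul_M E hcliff x0 x z, mul_add, ← mul_assoc, M_mul_Mb E hcliff x0 x,
    smul_mul_assoc, one_mul, mul_smul_comm, mul_one]

lemma MEME (u v : Fin p) :
    (Mm E x0 x * E u) * (Mm E x0 x * E v)
      = (r2c x0 x) • (E u * E v) + (2 * x u) • (E v * Mbm E x0 x)
        + (2 * x u * (2 * x v)) • (1 : Matrix (Fin N) (Fin N) ℂ) := by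
  rw [mul_assoc, ← mul_assoc (E u), ← mul_assoc (Mm E x0 x), MEM E hcliff x0 x u,
    add_mul, smul_mul_assoc, smul_mul_assoc, M_mul_E E hcliff x0 x v, smul_add, smul_smul]
  module

lemma Ppair {u v : Fin p} (huv : u ≠ v) :
    (Mm E x0 x * E u) * (Mm E x0 x * E v) - (Mm E x0 x * E v) * (Mm E x0 x * E u)
      = (2 * r2c x0 x) • (E u * E v) + (2 * x u) • (E v * Mbm E x0 x)
        - (2 * x v) • (E u * Mbm E x0 x) := by
  rw [MEME E hcliff x0 x u v, MEME E hcliff x0 x v u, hanti E hcliff (Ne.symm huv)]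
  module

lemma TL1 {D : List (Fin p)} (hnd : D.Nodup) (h2 : 2 ≤ D.length) (hup : D.length + 2 ≤ p) :
    (Mm E x0 x * T E D).trace = 0 := by
  rw [trace_M_mul]
  have hne : D ≠ [] := by intro h; rw [h] at h2; simp at h2
  rw [traceT0 E hcliff hnd hne (by omega)]
  rw [Finset.sum_eq_zero (fun i _ => ?_)]
  · ring
  · by_cases hi : i ∈ D
    · rw [traceET_mem E hcliff hnd hi h2, mul_zero]
    · rw [← T_cons, traceT0 E hcliff (List.nodup_cons.2 ⟨hi, hnd⟩)
        (List.cons_ne_nil _ _) (by simp only [List.length_cons]; omega), mul_zero]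

end WithCliff4

lemma W_id {q N : ℕ} (E : Fin (q + 1) → Matrix (Fin N) (Fin N) ℂ) :
    W E (id : Fin (q + 1) → Fin (q + 1)) = (List.ofFn E).prod := by
  rw [W, T, List.map_ofFn, Function.comp_id]

lemma TL2 {q N : ℕ} (E : Fin (q + 1) → Matrix (Fin N) (Fin N) ℂ)
    (hcliff : ∀ i j, E i * E j + E j * E i
      = if i = j then (-2 : ℂ) • (1 : Matrix (Fin N) (Fin N) ℂ) else 0)
    (x0 : ℂ) (x : Fin (q + 1) → ℂ) (hq : 2 ≤ q) (j : Fin (q + 1)) :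
    (Mm E x0 x * W E (Fin.succAbove j)).trace
      = (-1 : ℂ) ^ ((j : ℕ) + 1) * x j * (List.ofFn E).prod.trace := by
  rw [trace_M_mul]
  have hinj : Function.Injective (Fin.succAbove j) := Fin.succAbove_right_injective
  have hnd : (List.ofFn (Fin.succAbove j)).Nodup := List.nodup_ofFn.2 hinj
  have hlen : (List.ofFn (Fin.succAbove j)).length = q := List.length_ofFn
  have hne : (List.ofFn (Fin.succAbove j)) ≠ [] := by
    intro h; rw [h] at hlen; simp at hlen; omega
  have hW0 : (W E (Fin.succAbove j)).trace = 0 := by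
    rw [W]
    exact traceT0 E hcliff hnd hne (by omega)
  rw [hW0]
  have hsum : ∑ i, x i * (E i * W E (Fin.succAbove j)).trace
      = x j * (((-1 : ℂ)) ^ (j : ℕ) * (List.ofFn E).prod.trace) := by
    rw [Finset.sum_eq_single j]
    · congr 1
      have hfront := front1 E hcliff (id : Fin (q + 1) → Fin (q + 1))
          Function.injective_id j
      rw [Function.id_comp, W_id, id_eq] at hfront
      rw [hfront, trace_smul, smul_eq_mul]
    · intro i _ hij
      have hmem : i ∈ List.ofFn (Fin.succAbove j) := by
        rw [List.mem_ofFn]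
        obtain ⟨a, ha⟩ := Fin.exists_succAbove_eq hij
        exact ⟨a, ha⟩
      rw [W, traceET_mem E hcliff hnd hmem (by omega), mul_zero]
    · intro h; exact absurd (Finset.mem_univ j) h
  rw [hsum, pow_succ]
  ring


/-! ### permutation splitting -/

section PermSplit

open Equiv Equiv.Perm

variable {n : ℕ}

def rho (i : Fin (n + 1)) : Equiv.Perm (Fin (n + 1)) :=
  (finSuccEquiv' (0 : Fin (n + 1))).trans (finSuccEquiv' i).symm

lemma rho_zero (i : Fin (n + 1)) : rho i 0 = i := by
  simp [rho, finSuccEquiv'_at, finSuccEquiv'_symm_none]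

lemma rho_succ (i : Fin (n + 1)) (a : Fin n) : rho i a.succ = i.succAbove a := by
  have h : (finSuccEquiv' (0 : Fin (n + 1))) a.succ = some a := by
    rw [← Fin.succAbove_zero, finSuccEquiv'_succAbove]
  simp [rho, h, finSuccEquiv'_symm_some]

lemma rho_sign (i : Fin (n + 1)) : Equiv.Perm.sign (rho i) = (-1) ^ (i : ℕ) := by
  have h : Fin.cycleRange i * rho i = 1 := by
    apply Equiv.ext
    intro z
    induction z using Fin.cases with
    | zero => simp [Equiv.Perm.mul_apply, rho_zero, Fin.cycleRange_self]
    | succ a => simp [Equiv.Perm.mul_apply, rho_succ, Fin.cycleRange_succAbove]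
  have h2 : rho i = (Fin.cycleRange i)⁻¹ := eq_inv_of_mul_eq_one_right h
  rw [h2, Equiv.Perm.sign_inv, Fin.sign_cycleRange]

def liftP (τ : Equiv.Perm (Fin n)) : Equiv.Perm (Fin (n + 1)) :=
  Equiv.Perm.decomposeFin.symm (0, τ)

lemma liftP_zero (τ : Equiv.Perm (Fin n)) : liftP τ 0 = 0 :=
  Equiv.Perm.decomposeFin_symm_apply_zero 0 τ

lemma liftP_succ (τ : Equiv.Perm (Fin n)) (a : Fin n) : liftP τ a.succ = (τ a).succ := by
  rw [liftP, Equiv.Perm.decomposeFin_symm_apply_succ, Equiv.swap_self]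
  rfl

lemma liftP_sign (τ : Equiv.Perm (Fin n)) : Equiv.Perm.sign (liftP τ) = Equiv.Perm.sign τ := by
  rw [liftP, Equiv.Perm.decomposeFin.symm_sign, if_pos rfl, one_mul]

def phiP (i : Fin (n + 1)) (τ : Equiv.Perm (Fin n)) : Equiv.Perm (Fin (n + 1)) :=
  rho i * liftP τ

lemma phiP_zero (i : Fin (n + 1)) (τ : Equiv.Perm (Fin n)) : phiP i τ 0 = i := by
  rw [phiP, Equiv.Perm.mul_apply, liftP_zero, rho_zero]

lemma phiP_succ (i : Fin (n + 1)) (τ : Equiv.Perm (Fin n)) (a : Fin n) :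
    phiP i τ a.succ = i.succAbove (τ a) := by
  rw [phiP, Equiv.Perm.mul_apply, liftP_succ, rho_succ]

lemma phiP_sign (i : Fin (n + 1)) (τ : Equiv.Perm (Fin n)) :
    ((Equiv.Perm.sign (phiP i τ) : ℤ) : ℂ)
      = (-1 : ℂ) ^ (i : ℕ) * ((Equiv.Perm.sign τ : ℤ) : ℂ) := by
  rw [phiP, _root_.map_mul, rho_sign, liftP_sign]
  push_cast
  simp

lemma phiP_bij : Function.Bijective
    (fun z : Fin (n + 1) × Equiv.Perm (Fin n) => phiP z.1 z.2) := by
  rw [Fintype.bijective_iff_injective_and_card]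
  constructor
  · rintro ⟨i, τ⟩ ⟨i', τ'⟩ h
    simp only at h
    have h0 : i = i' := by rw [← phiP_zero i τ, ← phiP_zero i' τ', h]
    subst h0
    have h1 : liftP τ = liftP τ' := mul_left_cancel (a := rho i) h
    have h2 : ((0 : Fin (n + 1)), τ) = ((0 : Fin (n + 1)), τ') :=
      Equiv.Perm.decomposeFin.symm.injective h1
    simp only [Prod.mk.injEq] at h2
    exact Prod.ext rfl h2.2
  · rw [Fintype.card_prod, Fintype.card_perm, Fintype.card_perm, Fintype.card_fin,
      Fintype.card_fin, Nat.factorial_succ]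

lemma perm_reindex (F : Equiv.Perm (Fin (n + 1)) → ℂ) :
    ∑ σ : Equiv.Perm (Fin (n + 1)), F σ
      = ∑ i : Fin (n + 1), ∑ τ : Equiv.Perm (Fin n), F (phiP i τ) := by
  calc ∑ σ : Equiv.Perm (Fin (n + 1)), F σ
      = ∑ z : Fin (n + 1) × Equiv.Perm (Fin n), F (phiP z.1 z.2) :=
        (Fintype.sum_bijective _ phiP_bij (fun z => F (phiP z.1 z.2)) F (fun z => rfl)).symm
    _ = ∑ i : Fin (n + 1), ∑ τ : Equiv.Perm (Fin n), F (phiP i τ) := Fintype.sum_prod_type _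

lemma perm_swap_reindex {t : Equiv.Perm (Fin n)} (F : Equiv.Perm (Fin n) → ℂ) :
    ∑ σ : Equiv.Perm (Fin n), F (σ * t) = ∑ σ : Equiv.Perm (Fin n), F σ :=
  Fintype.sum_equiv (Equiv.mulRight t) _ _ (fun σ => rfl)

end PermSplit


/-! ### main induction -/

lemma prod_ofFn_succ {m : ℕ} {α : Type*} [Monoid α] (f : Fin (m + 1) → α) :
    (List.ofFn f).prod = f 0 * (List.ofFn fun a => f a.succ).prod := by
  rw [List.ofFn_succ, List.prod_cons]

noncomputable def Phi (n : ℕ) (D : List (Fin p)) (c : Fin n → Fin p) : ℂ :=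
  ∑ σ : Equiv.Perm (Fin n), ((Equiv.Perm.sign σ : ℤ) : ℂ) *
    (Mm E x0 x * (T E D * (List.ofFn fun a => Mm E x0 x * E (c (σ a))).prod)).trace

lemma T_app2 (D : List (Fin p)) (u v : Fin p) (P : Matrix (Fin N) (Fin N) ℂ) :
    T E D * (E u * (E v * P)) = T E (D ++ [u, v]) * P := by
  rw [T_append]
  simp [T, mul_assoc]

lemma T_W_append (D : List (Fin p)) {m : ℕ} (c : Fin m → Fin p) :
    T E D * W E c = T E (D ++ List.ofFn c) := by
  rw [W, ← T_append]

lemma subsingleton_perm_one : ∀ σ : Equiv.Perm (Fin 1), σ = 1 :=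
  fun σ => Equiv.ext fun a => Subsingleton.elim _ _

section StepHelpers

omit hcliff in
lemma sign_mul_swap_cast {n' : ℕ} (σ : Equiv.Perm (Fin n')) {a b : Fin n'} (hab : a ≠ b) :
    ((Equiv.Perm.sign (σ * Equiv.swap a b) : ℤ) : ℂ) = -((Equiv.Perm.sign σ : ℤ) : ℂ) := by
  rw [Equiv.Perm.sign_mul, Equiv.Perm.sign_swap hab]
  push_cast
  ring

include hcliff in
lemma tracePdiff {u v : Fin p} (huv : u ≠ v) (Dm R : Matrix (Fin N) (Fin N) ℂ) :
    (Mm E x0 x * (Dm * ((Mm E x0 x * E u) * ((Mm E x0 x * E v) * R)))).trace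
      - (Mm E x0 x * (Dm * ((Mm E x0 x * E v) * ((Mm E x0 x * E u) * R)))).trace
    = 2 * r2c x0 x * (Mm E x0 x * (Dm * (E u * (E v * R)))).trace
      + 2 * x u * (Mm E x0 x * (Dm * (E v * (Mbm E x0 x * R)))).trace
      - 2 * x v * (Mm E x0 x * (Dm * (E u * (Mbm E x0 x * R)))).trace := by
  have hp := Ppair E hcliff x0 x huv
  have h1 := congrArg (fun Z : Matrix (Fin N) (Fin N) ℂ => (Mm E x0 x * (Dm * (Z * R))).trace) hp
  simp only [sub_mul, add_mul, smul_mul_assoc, mul_sub, mul_add, mul_smul_comm,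
    trace_sub, trace_add, trace_smul, mul_assoc, smul_eq_mul] at h1
  simp only [mul_assoc]
  linear_combination h1

include hcliff in
lemma Mb_absorb (w : Fin p) (R' : Matrix (Fin N) (Fin N) ℂ) :
    Mbm E x0 x * ((Mm E x0 x * E w) * R') = (r2c x0 x) • (E w * R') := by
  rw [← mul_assoc, ← mul_assoc, Mb_mul_M E hcliff x0 x]
  simp [smul_mul_assoc, mul_assoc]


include hcliff in
lemma trace_MEvMb_zero {D : List (Fin p)} (hnd : D.Nodup) {v : Fin p} (hv : v ∉ D)
    (hlen : D.length + 1 < p) :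
    (Mm E x0 x * (T E D * (E v * Mbm E x0 x))).trace = 0 := by
  have h1 : Mm E x0 x * (T E D * (E v * Mbm E x0 x))
      = (Mm E x0 x * (T E D * E v)) * Mbm E x0 x := by
    simp only [mul_assoc]
  rw [h1, Matrix.trace_mul_comm, ← mul_assoc, ← mul_assoc, Mb_mul_M E hcliff x0 x,
    smul_mul_assoc, one_mul, smul_mul_assoc, trace_smul, smul_eq_mul]
  have h2 : T E D * E v = T E (D ++ [v]) := by
    rw [T_append]
    simp [T]
  rw [h2, traceT0 E hcliff
    (by
      rw [List.nodup_append]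
      refine ⟨hnd, List.nodup_singleton v, ?_⟩
      intro a ha b hb hab
      rw [List.mem_singleton] at hb
      subst hb; subst hab; exact hv ha)
    (by simp) (by simp only [List.length_append, List.length_singleton]; omega), mul_zero]

include hcliff in
lemma front2 {m : ℕ} (c : Fin (m + 2) → Fin p) (hc : Function.Injective c)
    (i₁ : Fin (m + 2)) (i₂ : Fin (m + 1)) :
    E (c i₁) * (E (c (i₁.succAbove i₂)) * W E (fun b => c (i₁.succAbove (i₂.succAbove b))))
      = (((-1 : ℂ)) ^ (i₁ : ℕ) * ((-1 : ℂ)) ^ (i₂ : ℕ)) • W E c := by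
  have h2 := front1 E hcliff (fun b => c (i₁.succAbove b))
    (fun a b hab => Fin.succAbove_right_injective (hc hab)) i₂
  have h1 := front1 E hcliff c hc i₁
  calc E (c i₁) * (E (c (i₁.succAbove i₂))
        * W E (fun b => c (i₁.succAbove (i₂.succAbove b))))
      = E (c i₁) * (E ((fun b => c (i₁.succAbove b)) i₂)
        * W E ((fun b => c (i₁.succAbove b)) ∘ i₂.succAbove)) := rfl
    _ = E (c i₁) * (((-1 : ℂ)) ^ (i₂ : ℕ) • W E (fun b => c (i₁.succAbove b))) := by rw [h2]
    _ = ((-1 : ℂ)) ^ (i₂ : ℕ) • (E (c i₁) * W E (c ∘ i₁.succAbove)) := by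
        rw [mul_smul_comm]; rfl
    _ = ((-1 : ℂ)) ^ (i₂ : ℕ) • (((-1 : ℂ)) ^ (i₁ : ℕ) • W E c) := by rw [h1]
    _ = (((-1 : ℂ)) ^ (i₁ : ℕ) * ((-1 : ℂ)) ^ (i₂ : ℕ)) • W E c := by
        rw [smul_smul, mul_comm]

omit hcliff in
lemma pair_conds {t : ℕ} (D : List (Fin p)) (d : Fin (t + 2) → Fin p) (hnd : D.Nodup)
    (hd : Function.Injective d) (hdD : ∀ a, d a ∉ D) (i₁ : Fin (t + 2)) (i₂ : Fin (t + 1)) :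
    (D ++ [d i₁, d (i₁.succAbove i₂)]).Nodup ∧
    Function.Injective (fun b : Fin t => d (i₁.succAbove (i₂.succAbove b))) ∧
    (∀ a : Fin t, d (i₁.succAbove (i₂.succAbove a)) ∉ D ++ [d i₁, d (i₁.succAbove i₂)]) := by
  refine ⟨?_, ?_, ?_⟩
  · rw [List.nodup_append]
    refine ⟨hnd, ?_, ?_⟩
    · simp only [List.nodup_cons, List.mem_cons, List.mem_singleton, List.not_mem_nil,
        not_false_iff, and_true, List.nodup_nil, or_false]
      exact fun h => (Fin.succAbove_ne i₁ i₂) (hd h).symm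
    · intro a ha b hmem hab
      subst hab
      simp only [List.mem_cons, List.mem_singleton, List.not_mem_nil, or_false] at hmem
      rcases hmem with h | h
      · exact hdD i₁ (h ▸ ha)
      · exact hdD _ (h ▸ ha)
  · intro a b hab
    exact Fin.succAbove_right_injective
      (Fin.succAbove_right_injective (hd hab) : i₂.succAbove a = i₂.succAbove b)
  · intro a
    rw [List.mem_append]
    rintro (h | h)
    · exact hdD _ h
    · simp only [List.mem_cons, List.mem_singleton, List.not_mem_nil, or_false] at h
      rcases h with h | h
      · exact Fin.succAbove_ne i₁ _ (hd h)
      · exact Fin.succAbove_ne i₂ a (Fin.succAbove_right_injective (hd h))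

omit hcliff in
lemma nodup_app_ofFn {t : ℕ} (D' : List (Fin p)) (hnd' : D'.Nodup) (g : Fin t → Fin p)
    (hg : Function.Injective g) (hgD : ∀ a, g a ∉ D') : (D' ++ List.ofFn g).Nodup := by
  rw [List.nodup_append]
  refine ⟨hnd', List.nodup_ofFn.2 hg, ?_⟩
  intro a ha b hmem hab
  subst hab
  rw [List.mem_ofFn] at hmem
  obtain ⟨b, rfl⟩ := hmem
  exact hgD b ha

end StepHelpers

lemma main_ind
    (hcliff : ∀ i j, E i * E j + E j * E i
      = if i = j then (-2 : ℂ) • (1 : Matrix (Fin N) (Fin N) ℂ) else 0) :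
    ∀ (n : ℕ) (D : List (Fin p)) (c : Fin n → Fin p), D.Nodup → Function.Injective c →
    (∀ a, c a ∉ D) → D.length + n < p →
    (Even n → Phi E x0 x n D c
        = r2c x0 x ^ (n / 2) * (Nat.factorial n : ℂ) *
          (Mm E x0 x * (T E D * W E c)).trace)
    ∧ (¬ Even n → 2 ≤ D.length → Phi E x0 x n D c = 0) := by
  intro n
  induction n using Nat.strong_induction_on with
  | _ n IH =>
  match n, IH with
  | 0, _ =>
    intro D c hnd hc hcD hlen
    constructor
    · intro _
      have h1 : ∀ σ : Equiv.Perm (Fin 0), σ = 1 :=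
        fun σ => Equiv.ext fun a => a.elim0
      rw [Phi, Fintype.sum_eq_single 1 ?_]
      · simp [W, T_nil, List.ofFn_zero, T]
      · intro σ hσ; exact absurd (h1 σ) hσ
    · intro h; exact absurd (by decide : Even 0) h
  | 1, _ =>
    intro D c hnd hc hcD hlen
    constructor
    · intro h; exact absurd h (by decide)
    · intro _ h2
      rw [Phi, Fintype.sum_eq_single 1 (fun σ hσ => absurd (subsingleton_perm_one σ) hσ)]
      have hofn : (List.ofFn fun a : Fin 1 => Mm E x0 x * E (c ((1 : Equiv.Perm (Fin 1)) a))).prod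
          = Mm E x0 x * E (c 0) := by
        simp
      rw [hofn]
      -- trace manipulation
      have hcyc : (Mm E x0 x * (T E D * (Mm E x0 x * E (c 0)))).trace
          = ((Mm E x0 x * (E (c 0) * Mm E x0 x)) * T E D).trace := by
        rw [← mul_assoc, Matrix.trace_mul_comm, ← mul_assoc, mul_assoc (Mm E x0 x)]
      rw [hcyc, MEM E hcliff x0 x (c 0), add_mul, smul_mul_assoc, smul_mul_assoc,
        trace_add, trace_smul, trace_smul, ← T_cons]
      have ht1 : (T E (c 0 :: D)).trace = 0 :=
        traceT0 E hcliff (List.nodup_cons.2 ⟨hcD 0, hnd⟩) (List.cons_ne_nil _ _)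
          (by simp only [List.length_cons]; omega)
      have ht2 : (Mm E x0 x * T E D).trace = 0 :=
        TL1 E hcliff x0 x hnd h2 (by omega)
      rw [ht1, ht2]
      simp
  | (m + 2), IH =>
    intro D c hnd hc hcD hlen
    have hne01 : (0 : Fin (m + 2)) ≠ (0 : Fin (m + 1)).succ := (Fin.succ_ne_zero 0).symm
    have huv : ∀ σ : Equiv.Perm (Fin (m + 2)), c (σ 0) ≠ c (σ (0 : Fin (m + 1)).succ) :=
      fun σ h => hne01 (σ.injective (hc h))
    -- step A : peel off the first two factors
    have hA : Phi E x0 x (m + 2) D c = ∑ σ : Equiv.Perm (Fin (m + 2)),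
        ((Equiv.Perm.sign σ : ℤ) : ℂ) *
        (Mm E x0 x * (T E D * ((Mm E x0 x * E (c (σ 0))) *
          ((Mm E x0 x * E (c (σ (0 : Fin (m + 1)).succ))) *
            (List.ofFn fun a : Fin m => Mm E x0 x * E (c (σ a.succ.succ))).prod)))).trace := by
      refine Finset.sum_congr rfl fun σ _ => ?_
      rw [prod_ofFn_succ, prod_ofFn_succ]
    -- step B : the swapped form
    have happ0 : ∀ σ : Equiv.Perm (Fin (m + 2)),
        (σ * Equiv.swap 0 ((0 : Fin (m + 1)).succ)) 0 = σ ((0 : Fin (m + 1)).succ) :=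
      fun σ => by rw [Equiv.Perm.mul_apply, Equiv.swap_apply_left]
    have happ1 : ∀ σ : Equiv.Perm (Fin (m + 2)),
        (σ * Equiv.swap 0 ((0 : Fin (m + 1)).succ)) ((0 : Fin (m + 1)).succ) = σ 0 :=
      fun σ => by rw [Equiv.Perm.mul_apply, Equiv.swap_apply_right]
    have happ2 : ∀ (σ : Equiv.Perm (Fin (m + 2))) (a : Fin m),
        (σ * Equiv.swap 0 ((0 : Fin (m + 1)).succ)) a.succ.succ = σ a.succ.succ :=
      fun σ a => by
        rw [Equiv.Perm.mul_apply, Equiv.swap_apply_of_ne_of_ne (Fin.succ_ne_zero _)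
          (fun h => Fin.succ_ne_zero a (Fin.succ_injective _ h))]
    have hB : Phi E x0 x (m + 2) D c = ∑ σ : Equiv.Perm (Fin (m + 2)),
        (-((Equiv.Perm.sign σ : ℤ) : ℂ)) *
        (Mm E x0 x * (T E D * ((Mm E x0 x * E (c (σ (0 : Fin (m + 1)).succ))) *
          ((Mm E x0 x * E (c (σ 0))) *
            (List.ofFn fun a : Fin m => Mm E x0 x * E (c (σ a.succ.succ))).prod)))).trace := by
      rw [hA, ← perm_swap_reindex (t := Equiv.swap 0 ((0 : Fin (m + 1)).succ))
        (F := fun σ => ((Equiv.Perm.sign σ : ℤ) : ℂ) *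
        (Mm E x0 x * (T E D * ((Mm E x0 x * E (c (σ 0))) *
          ((Mm E x0 x * E (c (σ (0 : Fin (m + 1)).succ))) *
            (List.ofFn fun a : Fin m => Mm E x0 x * E (c (σ a.succ.succ))).prod)))).trace)]
      refine Finset.sum_congr rfl fun σ _ => ?_
      have hR : (fun a : Fin m => Mm E x0 x *
          E (c ((σ * Equiv.swap 0 ((0 : Fin (m + 1)).succ)) a.succ.succ)))
          = fun a : Fin m => Mm E x0 x * E (c (σ a.succ.succ)) :=
        funext fun a => by rw [happ2]
      simp only [happ0, happ1, hR, sign_mul_swap_cast σ hne01]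
    -- step C : double
    have hC : 2 * Phi E x0 x (m + 2) D c = ∑ σ : Equiv.Perm (Fin (m + 2)),
        ((Equiv.Perm.sign σ : ℤ) : ℂ) *
        ((Mm E x0 x * (T E D * ((Mm E x0 x * E (c (σ 0))) *
          ((Mm E x0 x * E (c (σ (0 : Fin (m + 1)).succ))) *
            (List.ofFn fun a : Fin m => Mm E x0 x * E (c (σ a.succ.succ))).prod)))).trace
        - (Mm E x0 x * (T E D * ((Mm E x0 x * E (c (σ (0 : Fin (m + 1)).succ))) *
          ((Mm E x0 x * E (c (σ 0))) *
            (List.ofFn fun a : Fin m => Mm E x0 x * E (c (σ a.succ.succ))).prod)))).trace) := by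
      rw [two_mul]
      nth_rewrite 1 [hA]
      nth_rewrite 1 [hB]
      rw [← Finset.sum_add_distrib]
      exact Finset.sum_congr rfl fun σ _ => by ring
    -- step D/E : apply the pair identity and split the sum
    have hE2' : 2 * Phi E x0 x (m + 2) D c
        = 2 * r2c x0 x * (∑ σ : Equiv.Perm (Fin (m + 2)),
            ((Equiv.Perm.sign σ : ℤ) : ℂ) *
            (Mm E x0 x * (T E D * (E (c (σ 0)) * (E (c (σ (0 : Fin (m + 1)).succ)) *
              (List.ofFn fun a : Fin m => Mm E x0 x * E (c (σ a.succ.succ))).prod)))).trace)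
          + 2 * (∑ σ : Equiv.Perm (Fin (m + 2)),
            ((Equiv.Perm.sign σ : ℤ) : ℂ) *
            (x (c (σ 0)) *
            (Mm E x0 x * (T E D * (E (c (σ (0 : Fin (m + 1)).succ)) * (Mbm E x0 x *
              (List.ofFn fun a : Fin m => Mm E x0 x * E (c (σ a.succ.succ))).prod)))).trace))
          - 2 * (∑ σ : Equiv.Perm (Fin (m + 2)),
            ((Equiv.Perm.sign σ : ℤ) : ℂ) *
            (x (c (σ (0 : Fin (m + 1)).succ)) *
            (Mm E x0 x * (T E D * (E (c (σ 0)) * (Mbm E x0 x *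
              (List.ofFn fun a : Fin m => Mm E x0 x * E (c (σ a.succ.succ))).prod)))).trace)) := by
      have step1 : (∑ σ : Equiv.Perm (Fin (m + 2)),
          ((Equiv.Perm.sign σ : ℤ) : ℂ) *
          ((Mm E x0 x * (T E D * ((Mm E x0 x * E (c (σ 0))) *
            ((Mm E x0 x * E (c (σ (0 : Fin (m + 1)).succ))) *
              (List.ofFn fun a : Fin m => Mm E x0 x * E (c (σ a.succ.succ))).prod)))).trace
          - (Mm E x0 x * (T E D * ((Mm E x0 x * E (c (σ (0 : Fin (m + 1)).succ))) *
            ((Mm E x0 x * E (c (σ 0))) *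
              (List.ofFn fun a : Fin m => Mm E x0 x * E (c (σ a.succ.succ))).prod)))).trace))
          = ∑ σ : Equiv.Perm (Fin (m + 2)),
          (2 * r2c x0 x * (((Equiv.Perm.sign σ : ℤ) : ℂ) *
            (Mm E x0 x * (T E D * (E (c (σ 0)) * (E (c (σ (0 : Fin (m + 1)).succ)) *
              (List.ofFn fun a : Fin m => Mm E x0 x * E (c (σ a.succ.succ))).prod)))).trace)
          + 2 * (((Equiv.Perm.sign σ : ℤ) : ℂ) * (x (c (σ 0)) *
            (Mm E x0 x * (T E D * (E (c (σ (0 : Fin (m + 1)).succ)) * (Mbm E x0 x *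
              (List.ofFn fun a : Fin m => Mm E x0 x * E (c (σ a.succ.succ))).prod)))).trace))
          - 2 * (((Equiv.Perm.sign σ : ℤ) : ℂ) * (x (c (σ (0 : Fin (m + 1)).succ)) *
            (Mm E x0 x * (T E D * (E (c (σ 0)) * (Mbm E x0 x *
              (List.ofFn fun a : Fin m => Mm E x0 x * E (c (σ a.succ.succ))).prod)))).trace))) := by
        refine Finset.sum_congr rfl fun σ _ => ?_
        rw [tracePdiff E hcliff x0 x (huv σ) (T E D)
          ((List.ofFn fun a : Fin m => Mm E x0 x * E (c (σ a.succ.succ))).prod)]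
        ring
      rw [hC, step1, Finset.sum_sub_distrib, Finset.sum_add_distrib, ← Finset.mul_sum,
        ← Finset.mul_sum, ← Finset.mul_sum]
    -- step F : the third sum equals minus the second
    have hF : (∑ σ : Equiv.Perm (Fin (m + 2)),
          ((Equiv.Perm.sign σ : ℤ) : ℂ) *
          (x (c (σ (0 : Fin (m + 1)).succ)) *
          (Mm E x0 x * (T E D * (E (c (σ 0)) * (Mbm E x0 x *
            (List.ofFn fun a : Fin m => Mm E x0 x * E (c (σ a.succ.succ))).prod)))).trace))
        = -(∑ σ : Equiv.Perm (Fin (m + 2)),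
          ((Equiv.Perm.sign σ : ℤ) : ℂ) *
          (x (c (σ 0)) *
          (Mm E x0 x * (T E D * (E (c (σ (0 : Fin (m + 1)).succ)) * (Mbm E x0 x *
            (List.ofFn fun a : Fin m => Mm E x0 x * E (c (σ a.succ.succ))).prod)))).trace)) := by
      rw [← perm_swap_reindex (t := Equiv.swap 0 ((0 : Fin (m + 1)).succ))
        (F := fun σ => ((Equiv.Perm.sign σ : ℤ) : ℂ) *
          (x (c (σ (0 : Fin (m + 1)).succ)) *
          (Mm E x0 x * (T E D * (E (c (σ 0)) * (Mbm E x0 x *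
            (List.ofFn fun a : Fin m => Mm E x0 x * E (c (σ a.succ.succ))).prod)))).trace))]
      rw [← Finset.sum_neg_distrib]
      refine Finset.sum_congr rfl fun σ _ => ?_
      have hR : (fun a : Fin m => Mm E x0 x *
          E (c ((σ * Equiv.swap 0 ((0 : Fin (m + 1)).succ)) a.succ.succ)))
          = fun a : Fin m => Mm E x0 x * E (c (σ a.succ.succ)) :=
        funext fun a => by rw [happ2]
      simp only [happ0, happ1, hR, sign_mul_swap_cast σ hne01]
      ring
    -- combine : Phi = r2 * S1 + 2 * Sa
    have hPhi : Phi E x0 x (m + 2) D c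
        = r2c x0 x * (∑ σ : Equiv.Perm (Fin (m + 2)),
            ((Equiv.Perm.sign σ : ℤ) : ℂ) *
            (Mm E x0 x * (T E D * (E (c (σ 0)) * (E (c (σ (0 : Fin (m + 1)).succ)) *
              (List.ofFn fun a : Fin m => Mm E x0 x * E (c (σ a.succ.succ))).prod)))).trace)
          + 2 * (∑ σ : Equiv.Perm (Fin (m + 2)),
            ((Equiv.Perm.sign σ : ℤ) : ℂ) *
            (x (c (σ 0)) *
            (Mm E x0 x * (T E D * (E (c (σ (0 : Fin (m + 1)).succ)) * (Mbm E x0 x *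
              (List.ofFn fun a : Fin m => Mm E x0 x * E (c (σ a.succ.succ))).prod)))).trace)) := by
      rw [hF] at hE2'
      linear_combination hE2' / 2
    -- step G : evaluate S1 by double permutation splitting
    have hS1split : (∑ σ : Equiv.Perm (Fin (m + 2)),
          ((Equiv.Perm.sign σ : ℤ) : ℂ) *
          (Mm E x0 x * (T E D * (E (c (σ 0)) * (E (c (σ (0 : Fin (m + 1)).succ)) *
            (List.ofFn fun a : Fin m => Mm E x0 x * E (c (σ a.succ.succ))).prod)))).trace)
        = ∑ i₁ : Fin (m + 2), ∑ i₂ : Fin (m + 1),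
          (((-1 : ℂ)) ^ (i₁ : ℕ) * ((-1 : ℂ)) ^ (i₂ : ℕ)) *
          Phi E x0 x m (D ++ [c i₁, c (i₁.succAbove i₂)])
            (fun b => c (i₁.succAbove (i₂.succAbove b))) := by
      rw [perm_reindex (F := fun σ : Equiv.Perm (Fin (m + 2)) =>
        ((Equiv.Perm.sign σ : ℤ) : ℂ) *
        (Mm E x0 x * (T E D * (E (c (σ 0)) * (E (c (σ (0 : Fin (m + 1)).succ)) *
          (List.ofFn fun a : Fin m => Mm E x0 x * E (c (σ a.succ.succ))).prod)))).trace)]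
      refine Finset.sum_congr rfl fun i₁ _ => ?_
      have hpt : ∀ τ : Equiv.Perm (Fin (m + 1)),
          ((Equiv.Perm.sign (phiP i₁ τ) : ℤ) : ℂ) *
          (Mm E x0 x * (T E D * (E (c (phiP i₁ τ 0)) *
            (E (c (phiP i₁ τ (0 : Fin (m + 1)).succ)) *
            (List.ofFn fun a : Fin m =>
              Mm E x0 x * E (c (phiP i₁ τ a.succ.succ))).prod)))).trace
          = ((-1 : ℂ)) ^ (i₁ : ℕ) * (((Equiv.Perm.sign τ : ℤ) : ℂ) *
          (Mm E x0 x * (T E D * (E (c i₁) * (E (c (i₁.succAbove (τ 0))) *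
            (List.ofFn fun a : Fin m =>
              Mm E x0 x * E (c (i₁.succAbove (τ a.succ)))).prod)))).trace) := by
        intro τ
        have hR : (fun a : Fin m => Mm E x0 x * E (c (phiP i₁ τ a.succ.succ)))
            = fun a : Fin m => Mm E x0 x * E (c (i₁.succAbove (τ a.succ))) :=
          funext fun a => by rw [phiP_succ]
        rw [phiP_sign, phiP_zero, phiP_succ, hR, mul_assoc]
      rw [Finset.sum_congr rfl (fun τ _ => hpt τ), ← Finset.mul_sum]
      rw [perm_reindex (F := fun τ : Equiv.Perm (Fin (m + 1)) =>
        ((Equiv.Perm.sign τ : ℤ) : ℂ) *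
        (Mm E x0 x * (T E D * (E (c i₁) * (E (c (i₁.succAbove (τ 0))) *
          (List.ofFn fun a : Fin m =>
            Mm E x0 x * E (c (i₁.succAbove (τ a.succ)))).prod)))).trace)]
      rw [Finset.mul_sum]
      refine Finset.sum_congr rfl fun i₂ _ => ?_
      have hpt2 : ∀ ρ : Equiv.Perm (Fin m),
          ((Equiv.Perm.sign (phiP i₂ ρ) : ℤ) : ℂ) *
          (Mm E x0 x * (T E D * (E (c i₁) * (E (c (i₁.succAbove (phiP i₂ ρ 0))) *
            (List.ofFn fun a : Fin m =>
              Mm E x0 x * E (c (i₁.succAbove (phiP i₂ ρ a.succ)))).prod)))).trace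
          = ((-1 : ℂ)) ^ (i₂ : ℕ) * (((Equiv.Perm.sign ρ : ℤ) : ℂ) *
          (Mm E x0 x * (T E (D ++ [c i₁, c (i₁.succAbove i₂)]) *
            (List.ofFn fun a : Fin m =>
              Mm E x0 x *
                E (c (i₁.succAbove (i₂.succAbove (ρ a))))).prod)).trace) := by
        intro ρ
        have hR : (fun a : Fin m =>
            Mm E x0 x * E (c (i₁.succAbove (phiP i₂ ρ a.succ))))
            = fun a : Fin m =>
              Mm E x0 x * E (c (i₁.succAbove (i₂.succAbove (ρ a)))) :=
          funext fun a => by rw [phiP_succ]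
        rw [phiP_sign, phiP_zero, hR, mul_assoc, T_app2]
      rw [Finset.sum_congr rfl (fun ρ _ => hpt2 ρ), ← Finset.mul_sum, ← mul_assoc]
      rfl
    -- step H : the correction sum vanishes
    have hSa0 : (∑ σ : Equiv.Perm (Fin (m + 2)),
          ((Equiv.Perm.sign σ : ℤ) : ℂ) *
          (x (c (σ 0)) *
          (Mm E x0 x * (T E D * (E (c (σ (0 : Fin (m + 1)).succ)) * (Mbm E x0 x *
            (List.ofFn fun a : Fin m => Mm E x0 x * E (c (σ a.succ.succ))).prod)))).trace))
        = 0 := by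
      cases m with
      | zero =>
        refine Finset.sum_eq_zero fun σ _ => ?_
        rw [show (List.ofFn fun a : Fin 0 =>
            Mm E x0 x * E (c (σ a.succ.succ))).prod = 1 from by
          rw [List.ofFn_zero, List.prod_nil]]
        rw [mul_one, trace_MEvMb_zero E hcliff x0 x hnd (hcD _) (by omega), mul_zero, mul_zero]
      | succ m' =>
        have hpoint : ∀ σ : Equiv.Perm (Fin (m' + 3)),
            ((Equiv.Perm.sign σ : ℤ) : ℂ) *
            (x (c (σ 0)) *
            (Mm E x0 x * (T E D * (E (c (σ (0 : Fin (m' + 2)).succ)) * (Mbm E x0 x *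
              (List.ofFn fun a : Fin (m' + 1) =>
                Mm E x0 x * E (c (σ a.succ.succ))).prod)))).trace)
            = r2c x0 x * (((Equiv.Perm.sign σ : ℤ) : ℂ) *
            (x (c (σ 0)) *
            (Mm E x0 x * (T E D * (E (c (σ (0 : Fin (m' + 2)).succ)) *
              (E (c (σ (0 : Fin (m' + 1)).succ.succ)) *
              (List.ofFn fun a : Fin m' =>
                Mm E x0 x * E (c (σ a.succ.succ.succ))).prod)))).trace)) := by
          intro σ
          rw [prod_ofFn_succ, Mb_absorb E hcliff x0 x, mul_smul_comm, mul_smul_comm,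
            mul_smul_comm, trace_smul, smul_eq_mul]
          ring
        rw [Finset.sum_congr rfl (fun σ _ => hpoint σ), ← Finset.mul_sum]
        refine mul_eq_zero_of_right _ ?_
        rw [perm_reindex (F := fun σ : Equiv.Perm (Fin (m' + 3)) =>
            ((Equiv.Perm.sign σ : ℤ) : ℂ) *
            (x (c (σ 0)) *
            (Mm E x0 x * (T E D * (E (c (σ (0 : Fin (m' + 2)).succ)) *
              (E (c (σ (0 : Fin (m' + 1)).succ.succ)) *
              (List.ofFn fun a : Fin m' =>
                Mm E x0 x * E (c (σ a.succ.succ.succ))).prod)))).trace))]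
        refine Finset.sum_eq_zero fun i₁ _ => ?_
        have hpt1 : ∀ τ : Equiv.Perm (Fin (m' + 2)),
            ((Equiv.Perm.sign (phiP i₁ τ) : ℤ) : ℂ) *
            (x (c (phiP i₁ τ 0)) *
            (Mm E x0 x * (T E D * (E (c (phiP i₁ τ (0 : Fin (m' + 2)).succ)) *
              (E (c (phiP i₁ τ (0 : Fin (m' + 1)).succ.succ)) *
              (List.ofFn fun a : Fin m' =>
                Mm E x0 x * E (c (phiP i₁ τ a.succ.succ.succ))).prod)))).trace)
            = (((-1 : ℂ)) ^ (i₁ : ℕ) * x (c i₁)) * (((Equiv.Perm.sign τ : ℤ) : ℂ) *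
            (Mm E x0 x * (T E D * (E (c (i₁.succAbove (τ 0))) *
              (E (c (i₁.succAbove (τ (0 : Fin (m' + 1)).succ))) *
              (List.ofFn fun a : Fin m' =>
                Mm E x0 x * E (c (i₁.succAbove (τ a.succ.succ)))).prod)))).trace) := by
          intro τ
          simp only [phiP_sign, phiP_zero, phiP_succ]
          ring
        rw [Finset.sum_congr rfl (fun τ _ => hpt1 τ), ← Finset.mul_sum]
        refine mul_eq_zero_of_right _ ?_
        rw [perm_reindex (F := fun τ : Equiv.Perm (Fin (m' + 2)) =>
            ((Equiv.Perm.sign τ : ℤ) : ℂ) *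
            (Mm E x0 x * (T E D * (E (c (i₁.succAbove (τ 0))) *
              (E (c (i₁.succAbove (τ (0 : Fin (m' + 1)).succ))) *
              (List.ofFn fun a : Fin m' =>
                Mm E x0 x * E (c (i₁.succAbove (τ a.succ.succ)))).prod)))).trace)]
        refine Finset.sum_eq_zero fun i₂ _ => ?_
        have hpt2 : ∀ ρ : Equiv.Perm (Fin (m' + 1)),
            ((Equiv.Perm.sign (phiP i₂ ρ) : ℤ) : ℂ) *
            (Mm E x0 x * (T E D * (E (c (i₁.succAbove (phiP i₂ ρ 0))) *
              (E (c (i₁.succAbove (phiP i₂ ρ (0 : Fin (m' + 1)).succ))) *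
              (List.ofFn fun a : Fin m' =>
                Mm E x0 x * E (c (i₁.succAbove (phiP i₂ ρ a.succ.succ)))).prod)))).trace
            = ((-1 : ℂ)) ^ (i₂ : ℕ) * (((Equiv.Perm.sign ρ : ℤ) : ℂ) *
            (Mm E x0 x * (T E D * (E (c (i₁.succAbove i₂)) *
              (E (c (i₁.succAbove (i₂.succAbove (ρ 0)))) *
              (List.ofFn fun a : Fin m' =>
                Mm E x0 x * E (c (i₁.succAbove (i₂.succAbove (ρ a.succ))))).prod)))).trace) := by
          intro ρ
          simp only [phiP_sign, phiP_zero, phiP_succ]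
          ring
        rw [Finset.sum_congr rfl (fun ρ _ => hpt2 ρ), ← Finset.mul_sum]
        refine mul_eq_zero_of_right _ ?_
        rw [perm_reindex (F := fun ρ : Equiv.Perm (Fin (m' + 1)) =>
            ((Equiv.Perm.sign ρ : ℤ) : ℂ) *
            (Mm E x0 x * (T E D * (E (c (i₁.succAbove i₂)) *
              (E (c (i₁.succAbove (i₂.succAbove (ρ 0)))) *
              (List.ofFn fun a : Fin m' =>
                Mm E x0 x * E (c (i₁.succAbove (i₂.succAbove (ρ a.succ))))).prod)))).trace)]
        refine Finset.sum_eq_zero fun i₃ _ => ?_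
        have hpt3 : ∀ π : Equiv.Perm (Fin m'),
            ((Equiv.Perm.sign (phiP i₃ π) : ℤ) : ℂ) *
            (Mm E x0 x * (T E D * (E (c (i₁.succAbove i₂)) *
              (E (c (i₁.succAbove (i₂.succAbove (phiP i₃ π 0)))) *
              (List.ofFn fun a : Fin m' =>
                Mm E x0 x *
                  E (c (i₁.succAbove (i₂.succAbove (phiP i₃ π a.succ))))).prod)))).trace
            = ((-1 : ℂ)) ^ (i₃ : ℕ) * (((Equiv.Perm.sign π : ℤ) : ℂ) *
            (Mm E x0 x *
              (T E (D ++ [c (i₁.succAbove i₂), c (i₁.succAbove (i₂.succAbove i₃))]) *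
              (List.ofFn fun a : Fin m' =>
                Mm E x0 x *
                  E (c (i₁.succAbove (i₂.succAbove (i₃.succAbove (π a)))))).prod)).trace) := by
          intro π
          simp only [phiP_sign, phiP_zero, phiP_succ]
          rw [T_app2]
          ring
        rw [Finset.sum_congr rfl (fun π _ => hpt3 π), ← Finset.mul_sum]
        have hinner : (∑ π : Equiv.Perm (Fin m'),
            ((Equiv.Perm.sign π : ℤ) : ℂ) *
            (Mm E x0 x *
              (T E (D ++ [c (i₁.succAbove i₂), c (i₁.succAbove (i₂.succAbove i₃))]) *
              (List.ofFn fun a : Fin m' =>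
                Mm E x0 x *
                  E (c (i₁.succAbove (i₂.succAbove (i₃.succAbove (π a)))))).prod)).trace)
            = Phi E x0 x m'
              (D ++ [c (i₁.succAbove i₂), c (i₁.succAbove (i₂.succAbove i₃))])
              (fun b => c (i₁.succAbove (i₂.succAbove (i₃.succAbove b)))) := rfl
        rw [hinner]
        have hdinj : Function.Injective (fun b : Fin (m' + 2) => c (i₁.succAbove b)) :=
          fun a b hab => Fin.succAbove_right_injective (hc hab)
        obtain ⟨hnd'', hc'', hcD''⟩ := pair_conds D (fun b => c (i₁.succAbove b))
          hnd hdinj (fun a => hcD _) i₂ i₃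
        have hlen'' : (D ++ [c (i₁.succAbove i₂),
            c (i₁.succAbove (i₂.succAbove i₃))]).length + m' < p := by
          simp only [List.length_append, List.length_cons, List.length_nil]
          omega
        by_cases hm' : Even m'
        · have h := (IH m' (by omega) _ _ hnd'' hc'' hcD'' hlen'').1 hm'
          rw [h, T_W_append]
          rw [TL1 E hcliff x0 x
            (nodup_app_ofFn _ hnd'' _ hc'' hcD'')
            (by simp only [List.length_append, List.length_cons, List.length_nil,
              List.length_ofFn]; omega)
            (by simp only [List.length_append, List.length_cons, List.length_nil,
              List.length_ofFn]; omega), mul_zero, mul_zero]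
        · have h := (IH m' (by omega) _ _ hnd'' hc'' hcD'' hlen'').2 hm'
            (by simp only [List.length_append, List.length_cons, List.length_nil]; omega)
          rw [h, mul_zero]
    -- final assembly
    constructor
    · intro heven
      have hm : Even m := by rw [Nat.even_iff] at heven ⊢; omega
      have hsq : ∀ t : ℕ, ((-1 : ℂ)) ^ t * ((-1 : ℂ)) ^ t = 1 := fun t => by
        rw [← pow_add, ← two_mul, pow_mul]; norm_num
      have hval : ∀ (i₁ : Fin (m + 2)) (i₂ : Fin (m + 1)),
          (((-1 : ℂ)) ^ (i₁ : ℕ) * ((-1 : ℂ)) ^ (i₂ : ℕ)) *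
          Phi E x0 x m (D ++ [c i₁, c (i₁.succAbove i₂)])
            (fun b => c (i₁.succAbove (i₂.succAbove b)))
          = r2c x0 x ^ (m / 2) * (Nat.factorial m : ℂ) *
            (Mm E x0 x * (T E D * W E c)).trace := by
        intro i₁ i₂
        obtain ⟨hnd', hc', hcD'⟩ := pair_conds D c hnd hc hcD i₁ i₂
        have hlen' : (D ++ [c i₁, c (i₁.succAbove i₂)]).length + m < p := by
          simp only [List.length_append, List.length_cons, List.length_nil]; omega
        have h := (IH m (by omega) _ _ hnd' hc' hcD' hlen').1 hm
        rw [h]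
        have htr : T E (D ++ [c i₁, c (i₁.succAbove i₂)]) *
            W E (fun b => c (i₁.succAbove (i₂.succAbove b)))
            = T E D * (E (c i₁) * (E (c (i₁.succAbove i₂)) *
              W E (fun b => c (i₁.succAbove (i₂.succAbove b))))) := (T_app2 E D _ _ _).symm
        rw [htr, front2 E hcliff c hc i₁ i₂, mul_smul_comm, mul_smul_comm, trace_smul,
          smul_eq_mul]
        linear_combination
          (((-1 : ℂ)) ^ (i₂ : ℕ) * ((-1 : ℂ)) ^ (i₂ : ℕ) * (r2c x0 x ^ (m / 2) *
            (Nat.factorial m : ℂ) * (Mm E x0 x * (T E D * W E c)).trace)) * hsq (i₁ : ℕ)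
          + (r2c x0 x ^ (m / 2) * (Nat.factorial m : ℂ) *
            (Mm E x0 x * (T E D * W E c)).trace) * hsq (i₂ : ℕ)
      rw [hPhi, hSa0, hS1split,
        Finset.sum_congr rfl (fun i₁ _ => Finset.sum_congr rfl (fun i₂ _ => hval i₁ i₂))]
      simp only [Finset.sum_const, Finset.card_univ, Fintype.card_fin, nsmul_eq_mul]
      rw [show (m + 2) / 2 = m / 2 + 1 from by omega, pow_succ, Nat.factorial_succ,
        Nat.factorial_succ]
      push_cast
      ring
    · intro hodd h2D
      have hm : ¬ Even m := by rw [Nat.even_iff] at hodd ⊢; omega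
      have hval0 : ∀ (i₁ : Fin (m + 2)) (i₂ : Fin (m + 1)),
          Phi E x0 x m (D ++ [c i₁, c (i₁.succAbove i₂)])
            (fun b => c (i₁.succAbove (i₂.succAbove b))) = 0 := by
        intro i₁ i₂
        obtain ⟨hnd', hc', hcD'⟩ := pair_conds D c hnd hc hcD i₁ i₂
        have hlen' : (D ++ [c i₁, c (i₁.succAbove i₂)]).length + m < p := by
          simp only [List.length_append, List.length_cons, List.length_nil]; omega
        exact (IH m (by omega) _ _ hnd' hc' hcD' hlen').2 hm
          (by simp only [List.length_append, List.length_cons, List.length_nil]; omega)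
      rw [hPhi, hSa0, hS1split,
        Finset.sum_congr rfl (fun i₁ _ => Finset.sum_congr rfl
          (fun i₂ _ => by rw [hval0 i₁ i₂, mul_zero]))]
      simp

end Stmt11Aux


open Stmt11Aux

/-- let `p = 2k-1` (`k ≥ 2`), `E₁,…,E_p` skew-adjoint Clifford
matrices, `M = x₀·I - Σᵢ x'ᵢ Eᵢ`. For every `j ∈ {1,…,p}` with increasing
enumeration `ι = (i₁ < … < i_{p-1})` of `{1,…,p} \ {j}`,
`Σ_{σ ∈ S_{p-1}} sgn σ · tr(M² E_{i_{σ(1)}} M E_{i_{σ(2)}} ⋯ M E_{i_{σ(p-1)}})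
  = (-1)^j x'_j (x₀² + |x'|²)^{(p-1)/2} (p-1)! tr(E₁⋯E_p)`.
(Here `(-1)^j` refers to the 1-based index `j`.) -/
theorem stmt_11 (k : ℕ) (hk : 2 ≤ k) (p : ℕ) (hp : p = 2 * k - 1)
    (N : ℕ) (hN : 1 ≤ N) (E : Fin p → Matrix (Fin N) (Fin N) ℂ)
    (hskew : ∀ i, (E i)ᴴ = -(E i))
    (hcliff : ∀ i j, E i * E j + E j * E i
      = if i = j then (-2 : ℂ) • (1 : Matrix (Fin N) (Fin N) ℂ) else 0)
    (x₀ : ℝ) (x' : Fin p → ℝ)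
    (M : Matrix (Fin N) (Fin N) ℂ)
    (hM : M = (x₀ : ℂ) • (1 : Matrix (Fin N) (Fin N) ℂ)
      - ∑ i, (x' i : ℂ) • E i)
    (j : Fin p) (ι : Fin (p - 1) → Fin p)
    (hι : StrictMono ι) (hιj : ∀ a, ι a ≠ j) :
    ∑ σ : Equiv.Perm (Fin (p - 1)), ((Equiv.Perm.sign σ : ℤ) : ℂ) *
        (M * (List.ofFn fun a : Fin (p - 1) => M * E (ι (σ a))).prod).trace
      = (-1 : ℂ) ^ ((j : ℕ) + 1) * (x' j : ℂ)
        * (((x₀ ^ 2 + ∑ i, x' i ^ 2 : ℝ) ^ (((p : ℝ) - 1) / 2) : ℝ) : ℂ)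
        * (Nat.factorial (p - 1) : ℂ) * (List.ofFn E).prod.trace := by
  have hp3 : 3 ≤ p := by omega
  obtain ⟨q, rfl⟩ : ∃ q, p = q + 1 := ⟨p - 1, by omega⟩
  have hq2 : 2 ≤ q := by omega
  have hqeven : Even q := ⟨k - 1, by omega⟩
  -- identify ι with j.succAbove
  have hiota : ι = fun a : Fin (q + 1 - 1) => j.succAbove a := by
    have hcard : ((Finset.univ : Finset (Fin (q + 1))).erase j).card = q + 1 - 1 := by
      rw [Finset.card_erase_of_mem (Finset.mem_univ j), Finset.card_univ, Fintype.card_fin]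
    have h1 := Finset.orderEmbOfFin_unique hcard (f := ι)
      (fun a => Finset.mem_erase.2 ⟨hιj a, Finset.mem_univ _⟩) hι
    have h2 := Finset.orderEmbOfFin_unique hcard
      (f := fun a : Fin (q + 1 - 1) => j.succAbove a)
      (fun a => Finset.mem_erase.2 ⟨Fin.succAbove_ne j a, Finset.mem_univ _⟩)
      (Fin.strictMono_succAbove j)
    exact h1.trans h2.symm
  have hMM : M = Mm E (x₀ : ℂ) (fun i => (x' i : ℂ)) := by rw [hM, Mm, Vm]
  -- the left-hand side as Phi
  have hL : (∑ σ : Equiv.Perm (Fin (q + 1 - 1)), ((Equiv.Perm.sign σ : ℤ) : ℂ) *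
        (M * (List.ofFn fun a : Fin (q + 1 - 1) => M * E (ι (σ a))).prod).trace)
      = Phi E (x₀ : ℂ) (fun i => (x' i : ℂ)) q [] ι := by
    rw [Phi]
    refine Finset.sum_congr rfl fun σ _ => ?_
    rw [T_nil, one_mul]
    simp only [hMM]
    rfl
  rw [hL]
  have hmain := (main_ind E (x₀ : ℂ) (fun i => (x' i : ℂ)) hcliff q [] ι
    List.nodup_nil hι.injective (fun a => List.not_mem_nil)
    (by simp only [List.length_nil]; omega)).1 hqeven
  rw [hmain, T_nil, one_mul, hiota]
  rw [TL2 E hcliff (x₀ : ℂ) (fun i => (x' i : ℂ)) hq2 j]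
  -- now handle the real power
  have hbase : ((x₀ ^ 2 + ∑ i, x' i ^ 2 : ℝ) : ℂ) = r2c (x₀ : ℂ) (fun i => (x' i : ℂ)) := by
    rw [r2c]
    push_cast
    ring
  have hexp : ((x₀ ^ 2 + ∑ i, x' i ^ 2 : ℝ) ^ ((((q + 1 : ℕ) : ℝ) - 1) / 2) : ℝ)
      = (x₀ ^ 2 + ∑ i, x' i ^ 2 : ℝ) ^ (q / 2 : ℕ) := by
    rw [show ((((q + 1 : ℕ) : ℝ)) - 1) / 2 = ((q / 2 : ℕ) : ℝ) from ?_]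
    · exact Real.rpow_natCast _ _
    · obtain ⟨r, hr⟩ := hqeven
      push_cast [show q / 2 = r from by omega]
      ring_nf
      rw [show ((q : ℝ)) = 2 * r from by push_cast [hr]; ring]
      ring
  rw [hexp]
  push_cast [← hbase]
  ring
end

section
/- Let a ∈ ℝ with a ≠ 0 and let x ∈ ℝ^p. Then the matrix f := a·I + Σ_{j=1}^p x_j E_j is invertible, and Σ_{σ ∈ S_p} sgn(σ) · tr( f^{−1} E_{σ(1)} f^{−1} E_{σ(2)} ⋯ f^{−1} E_{σ(p)} ) = p! · a · (a² + |x|²)^{−(p+1)/2} · tr(E_1 E_2 ⋯ E_p). -/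
/-!
Put `c = a² + |x|²` and `f̄ = a - ∑ xⱼ Eⱼ`. The Clifford relations give `f f̄ = f̄ f = c`, so `f` is
invertible with `f⁻¹ Eⱼ = c⁻¹ f̄ Eⱼ = c⁻¹ (Eⱼ f + 2 xⱼ)`, and therefore
`(f⁻¹ Eᵢ)(f⁻¹ Eⱼ) = c⁻¹ (Eᵢ Eⱼ + 2 xᵢ f⁻¹ Eⱼ)`. Multiply out the word `f⁻¹E_{σ1} ⋯ f⁻¹E_{σp}` two
factors at a time from the left. A term carrying two scalars `x_{σb} x_{σb'}` is unchanged when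
`σb` and `σb'` are exchanged, so it cancels in the alternating sum. A term carrying one scalar ends
as the trace of a product of the `p - 1` remaining distinct generators; as `p - 1` is even, this
product anticommutes with each of its (invertible) factors, so its trace vanishes. What is left is
`c^{-(p+1)/2} ∑ sgn σ tr(E_{σ1} ⋯ E_{σp} f) = c^{-(p+1)/2} p! tr(E₁ ⋯ E_p f)`, and
`tr(E₁ ⋯ E_p Eⱼ) = 0` reduces `tr(E₁ ⋯ E_p f)` to `a tr(E₁ ⋯ E_p)`.
-/

open Equiv Matrix

section Clifford

variable (K : Type*) {A ι : Type*} [Field K] [Ring A] [Algebra K A] [DecidableEq ι]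

def IsClifford (E : ι → A) : Prop :=
  ∀ i j, E i * E j + E j * E i = if i = j then (-2 : K) • (1 : A) else 0

variable {K} {E : ι → A}

theorem IsClifford.mul_self [NeZero (2 : K)] (hE : IsClifford K E) (i : ι) : E i * E i = -1 := by
  have h := hE i i
  rw [if_pos rfl, ← two_smul K, neg_smul, ← smul_neg] at h
  exact smul_right_injective A two_ne_zero h

theorem IsClifford.anticomm (hE : IsClifford K E) :
    Pairwise fun i j => E i * E j = -(E j * E i) := fun i j hij =>
  eq_neg_of_add_eq_zero_left ((hE i j).trans (if_neg hij))

variable [Fintype ι]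

theorem IsClifford.sum_smul_mul_add_mul_sum_smul (hE : IsClifford K E) (x : ι → K) (j : ι) :
    (∑ i, x i • E i) * E j + E j * (∑ i, x i • E i) = (-2 * x j) • 1 := by
  rw [Finset.sum_mul, Finset.mul_sum, ← Finset.sum_add_distrib]
  calc ∑ i, (x i • E i * E j + E j * x i • E i) = ∑ i, x i • (E i * E j + E j * E i) := by
        simp only [smul_mul_assoc, mul_smul_comm, smul_add]
    _ = ∑ i, x i • (if i = j then (-2 : K) • (1 : A) else 0) :=
        Finset.sum_congr rfl fun i _ => by rw [hE i j]
    _ = (-2 * x j) • 1 := by simp [smul_smul, mul_comm]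

theorem IsClifford.sum_smul_mul_self [NeZero (2 : K)] (hE : IsClifford K E) (x : ι → K) :
    (∑ i, x i • E i) * (∑ i, x i • E i) = -(∑ i, x i ^ 2) • 1 := by
  have h : (2 : K) • ((∑ i, x i • E i) * (∑ i, x i • E i))
      = ∑ j, x j • ((∑ i, x i • E i) * E j + E j * (∑ i, x i • E i)) := by
    rw [two_smul]
    nth_rw 1 [Finset.mul_sum]
    rw [Finset.sum_mul, ← Finset.sum_add_distrib]
    simp only [mul_smul_comm, smul_mul_assoc, smul_add]
  simp only [hE.sum_smul_mul_add_mul_sum_smul, smul_smul, ← Finset.sum_smul] at h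
  refine smul_right_injective A (two_ne_zero (α := K)) (h.trans ?_)
  show _ = (2 : K) • _
  rw [smul_smul, mul_neg, Finset.mul_sum, ← Finset.sum_neg_distrib]
  exact congrArg (· • (1 : A)) (Finset.sum_congr rfl fun j _ => by ring)

theorem IsClifford.add_mul_sub [NeZero (2 : K)] (hE : IsClifford K E) (a : K) (x : ι → K) :
    (a • 1 + ∑ i, x i • E i) * (a • 1 - ∑ i, x i • E i) = (a ^ 2 + ∑ i, x i ^ 2) • 1 := by
  rw [add_mul, mul_sub, mul_sub, hE.sum_smul_mul_self, smul_mul_smul_comm, one_mul, mul_smul_comm,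
    smul_mul_assoc, one_mul, mul_one, add_smul, sq, neg_smul]
  abel

theorem IsClifford.sub_mul_add [NeZero (2 : K)] (hE : IsClifford K E) (a : K) (x : ι → K) :
    (a • 1 - ∑ i, x i • E i) * (a • 1 + ∑ i, x i • E i) = (a ^ 2 + ∑ i, x i ^ 2) • 1 := by
  rw [sub_mul, mul_add, mul_add, hE.sum_smul_mul_self, smul_mul_smul_comm, one_mul, mul_smul_comm,
    smul_mul_assoc, one_mul, mul_one, add_smul, sq, neg_smul]
  abel

theorem IsClifford.sub_mul_eq_mul_add (hE : IsClifford K E) (a : K) (x : ι → K) (j : ι) :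
    (a • 1 - ∑ i, x i • E i) * E j = E j * (a • 1 + ∑ i, x i • E i) + (2 * x j) • 1 := by
  have h := hE.sum_smul_mul_add_mul_sum_smul x j
  rw [_root_.sub_mul, eq_sub_of_add_eq h, mul_add, smul_mul_assoc, one_mul, mul_smul_comm, mul_one,
    neg_mul, neg_smul]
  abel

theorem IsClifford.isUnit_smul_one_add [NeZero (2 : K)] (hE : IsClifford K E) {a : K} {x : ι → K}
    (hc : a ^ 2 + ∑ i, x i ^ 2 ≠ 0) : IsUnit (a • 1 + ∑ i, x i • E i) :=
  ⟨⟨_, (a ^ 2 + ∑ i, x i ^ 2)⁻¹ • (a • 1 - ∑ i, x i • E i),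
    by rw [mul_smul_comm, hE.add_mul_sub, smul_smul, inv_mul_cancel₀ hc, one_smul],
    by rw [smul_mul_assoc, hE.sub_mul_add, smul_smul, inv_mul_cancel₀ hc, one_smul]⟩, rfl⟩

end Clifford

section Anticommuting

variable {R : Type*} [Ring R]

theorem prod_ofFn_comp_swap_castSucc_succ {m : ℕ} (h : Fin (m + 1) → R) (i : Fin m)
    (hi : h i.castSucc * h i.succ = -(h i.succ * h i.castSucc)) :
    (List.ofFn (h ∘ swap i.castSucc i.succ)).prod = -(List.ofFn h).prod := by
  induction m with
  | zero => exact i.elim0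
  | succ m ih =>
    cases i using Fin.cases with
    | zero =>
      have hrest : ∀ k : Fin m, swap (0 : Fin (m + 2)) 1 k.succ.succ = k.succ.succ := fun k =>
        swap_apply_of_ne_of_ne (Fin.succ_ne_zero _) (by simp [Fin.ext_iff])
      simp only [Fin.castSucc_zero, Fin.succ_zero_eq_one] at hi ⊢
      simp only [List.ofFn_succ, List.prod_cons, Function.comp_apply, Fin.succ_zero_eq_one,
        swap_apply_left, swap_apply_right, hrest]
      rw [← mul_assoc, ← mul_assoc, ← neg_mul, hi, neg_neg]
    | succ i =>
      have hhead : swap i.succ.castSucc i.succ.succ 0 = 0 :=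
        swap_apply_of_ne_of_ne (by simp [Fin.ext_iff]) (by simp [Fin.ext_iff])
      have htail : (fun k : Fin (m + 1) => (h ∘ swap i.succ.castSucc i.succ.succ) k.succ)
          = (h ∘ Fin.succ) ∘ swap i.castSucc i.succ := by
        funext k
        simp [(Fin.succ_injective _).swap_apply]
      rw [List.ofFn_succ, htail, List.prod_cons,
        ih (h ∘ Fin.succ) i (by simpa only [Function.comp_apply, Fin.succ_castSucc] using hi),
        List.ofFn_succ (f := h), List.prod_cons, mul_neg, Function.comp_apply, hhead]
      rfl

theorem prod_ofFn_comp_perm {m : ℕ} (h : Fin m → R)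
    (hanti : Pairwise fun i j => h i * h j = -(h j * h i)) (σ : Perm (Fin m)) :
    (List.ofFn (h ∘ σ)).prod = (Perm.sign σ : ℤ) • (List.ofFn h).prod := by
  cases m with
  | zero => simp [Subsingleton.elim σ 1]
  | succ m =>
    induction (Perm.mclosure_swap_castSucc_succ m).ge (Set.mem_univ σ) using
      Submonoid.closure_induction generalizing h with
    | mem τ hτ =>
      obtain ⟨i, rfl⟩ := hτ
      rw [prod_ofFn_comp_swap_castSucc_succ h i (hanti (Fin.castSucc_lt_succ (i := i)).ne),
        Perm.sign_swap (Fin.castSucc_lt_succ (i := i)).ne]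
      simp
    | one => simp
    | mul τ ρ _ _ hτ hρ =>
      have hanti' : Pairwise fun i j => (h ∘ τ) i * (h ∘ τ) j = -((h ∘ τ) j * (h ∘ τ) i) :=
        fun i j hij => hanti (τ.injective.ne hij)
      rw [Perm.coe_mul, ← Function.comp_assoc, hρ _ hanti', hτ h hanti, smul_smul,
        Perm.sign_mul, Units.val_mul, mul_comm]

theorem mul_prod_map_eq_neg_one_pow_zsmul {ι : Type*} [DecidableEq ι] {E : ι → R}
    (hanti : Pairwise fun i j => E i * E j = -(E j * E i)) (j : ι) (l : List ι) :
    E j * (l.map E).prod = (-1 : ℤ) ^ (l.length + l.count j) • ((l.map E).prod * E j) := by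
  induction l with
  | nil => simp
  | cons i l ih =>
    rw [List.map_cons, List.prod_cons, List.length_cons]
    by_cases hij : i = j
    · subst hij
      conv_lhs => rw [ih, mul_smul_comm, ← mul_assoc]
      rw [List.count_cons_self,
        show l.length + 1 + (l.count i + 1) = l.length + l.count i + 2 by ring, pow_add (-1 : ℤ) _ 2, neg_one_sq, mul_one]
    · rw [← mul_assoc, hanti (Ne.symm hij), neg_mul, mul_assoc, ih, mul_smul_comm, ← mul_assoc,
        List.count_cons_of_ne hij, add_right_comm, pow_succ, mul_neg_one, neg_smul]

end Anticommuting

section Trace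

variable {n K : Type*} [Fintype n] [DecidableEq n] [Field K]

theorem Matrix.trace_eq_zero_of_mul_eq_neg_mul [NeZero (2 : K)] {A P : Matrix n n K}
    (hA : IsUnit A) (h : A * P = -(P * A)) : P.trace = 0 := by
  obtain ⟨u, rfl⟩ := hA
  have h' : P.trace = -P.trace :=
    calc P.trace = (↑u⁻¹ * (↑u * P) : Matrix n n K).trace := by
          rw [← mul_assoc, Units.inv_mul, one_mul]
      _ = -(P * ↑u * ↑u⁻¹ : Matrix n n K).trace := by rw [h, mul_neg, trace_neg, trace_mul_comm]
      _ = -P.trace := by rw [mul_assoc, Units.mul_inv, mul_one]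
  have h2 : (2 : K) * P.trace = 0 := by linear_combination h'
  exact (mul_eq_zero.mp h2).resolve_left two_ne_zero

theorem trace_prod_map_eq_zero [NeZero (2 : K)] {ι : Type*} [DecidableEq ι] {E : ι → Matrix n n K}
    (hsq : ∀ i, E i * E i = -1) (hanti : Pairwise fun i j => E i * E j = -(E j * E i))
    {l : List ι} {j : ι} (hodd : Odd (l.length + l.count j)) : (l.map E).prod.trace = 0 := by
  refine trace_eq_zero_of_mul_eq_neg_mul ⟨⟨E j, -E j, ?_, ?_⟩, rfl⟩ ?_
  · rw [mul_neg, hsq, neg_neg]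
  · rw [neg_mul, hsq, neg_neg]
  · rw [mul_prod_map_eq_neg_one_pow_zsmul hanti, hodd.neg_one_pow, neg_one_zsmul]

theorem IsClifford.inv_smul_one_add [NeZero (2 : K)] {ι : Type*} [Fintype ι] [DecidableEq ι]
    {E : ι → Matrix n n K} (hE : IsClifford K E) {a : K} {x : ι → K}
    (hc : a ^ 2 + ∑ i, x i ^ 2 ≠ 0) :
    (a • 1 + ∑ i, x i • E i)⁻¹ = (a ^ 2 + ∑ i, x i ^ 2)⁻¹ • (a • 1 - ∑ i, x i • E i) :=
  inv_eq_right_inv (by rw [mul_smul_comm, hE.add_mul_sub, smul_smul, inv_mul_cancel₀ hc, one_smul])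

variable {p : ℕ} {E : Fin p → Matrix n n K}

theorem sum_sign_mul_trace_prod_ofFn_comp_mul
    (hanti : Pairwise fun i j => E i * E j = -(E j * E i)) (M : Matrix n n K) :
    ∑ σ : Perm (Fin p), (Perm.sign σ : ℤ) * ((List.ofFn (E ∘ σ)).prod * M).trace
      = p.factorial * ((List.ofFn E).prod * M).trace := by
  have hterm : ∀ σ : Perm (Fin p), (Perm.sign σ : ℤ) * ((List.ofFn (E ∘ σ)).prod * M).trace
      = ((List.ofFn E).prod * M).trace := fun σ => by
    rw [prod_ofFn_comp_perm E hanti, smul_mul_assoc, trace_smul, zsmul_eq_mul, ← mul_assoc,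
      ← Int.cast_mul, ← Units.val_mul, Int.units_mul_self, Units.val_one, Int.cast_one, one_mul]
  rw [Finset.sum_congr rfl fun σ _ => hterm σ, Finset.sum_const, Finset.card_univ,
    Fintype.card_perm, Fintype.card_fin, nsmul_eq_mul]

theorem IsClifford.trace_prod_ofFn_mul_eq_zero [NeZero (2 : K)] (hE : IsClifford K E)
    (hp : Odd p) (hp1 : 1 < p) (j : Fin p) : ((List.ofFn E).prod * E j).trace = 0 := by
  have : Nontrivial (Fin p) := Fin.nontrivial_iff_two_le.mpr hp1
  obtain ⟨i, hi⟩ := exists_ne j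
  have hω : (List.ofFn E).prod * E j = ((List.finRange p ++ [j]).map E).prod := by
    simp [List.ofFn_eq_map]
  have hodd : Odd ((List.finRange p ++ [j]).length + (List.finRange p ++ [j]).count i) := by
    simp [hi.symm, hp]
  rw [hω, trace_prod_map_eq_zero hE.mul_self hE.anticomm hodd]

theorem IsClifford.trace_prod_ofFn_mul_smul_one_add [NeZero (2 : K)] (hE : IsClifford K E)
    (hp : Odd p) (hp1 : 1 < p) (a : K) (x : Fin p → K) :
    ((List.ofFn E).prod * (a • 1 + ∑ j, x j • E j)).trace = a * (List.ofFn E).prod.trace := by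
  simp [mul_add, Finset.mul_sum, trace_sum, hE.trace_prod_ofFn_mul_eq_zero hp hp1]

end Trace

section AltTrace

variable {p : ℕ} {n K : Type*} [Fintype n] [DecidableEq n] [Field K]

/-- `L` and `R` are lists of positions in the word, not of generators: position `b` is filled by
`E (σ b)` if `b ∈ L` and by `T (σ b)` if `b ∈ R`. -/
noncomputable def altTrace (E T : Fin p → Matrix n n K) (φ : Perm (Fin p) → K)
    (L R : List (Fin p)) : K :=
  ∑ σ : Perm (Fin p), (Perm.sign σ : ℤ) *
    (φ σ * ((L.map (E ∘ σ)).prod * (R.map (T ∘ σ)).prod).trace)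

variable {E T : Fin p → Matrix n n K}

theorem altTrace_eq_zero_of_swap {φ : Perm (Fin p) → K} {L R : List (Fin p)} {a b : Fin p}
    (hab : a ≠ b) (haL : a ∉ L) (hbL : b ∉ L) (haR : a ∉ R) (hbR : b ∉ R)
    (hφ : ∀ σ, φ (σ * swap a b) = φ σ) : altTrace E T φ L R = 0 := by
  have hmap : ∀ (σ : Perm (Fin p)) (M : Fin p → Matrix n n K) (l : List (Fin p)), a ∉ l → b ∉ l →
      l.map (M ∘ ⇑(σ * swap a b)) = l.map (M ∘ σ) := fun σ M l ha hb =>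
    List.map_congr_left fun c hc => by
      simp [swap_apply_of_ne_of_ne (ne_of_mem_of_not_mem hc ha) (ne_of_mem_of_not_mem hc hb)]
  refine Finset.sum_ninvolution (fun σ => σ * swap a b) (fun σ => ?_) (fun σ _ => ?_)
    (fun _ => Finset.mem_univ _) (fun σ => by simp [mul_assoc])
  · rw [hφ, hmap σ E L haL hbL, hmap σ T R haR hbR, Perm.sign_mul, Perm.sign_swap hab]
    push_cast
    ring
  · simpa [swap_eq_one_iff] using hab

variable {f : Matrix n n K} {c : K} {y : Fin p → K}

theorem altTrace_cons_cons (hT : ∀ j, T j = c • (E j * f + y j • 1)) (hfT : ∀ j, f * T j = E j)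
    (φ : Perm (Fin p) → K) (L R : List (Fin p)) (i j : Fin p) :
    altTrace E T φ L (i :: j :: R) = c * altTrace E T φ (L ++ [i, j]) R
      + c * altTrace E T (fun σ => φ σ * y (σ i)) L (j :: R) := by
  have hpair : ∀ i j M, T i * (T j * M) = c • (E i * (E j * M)) + (c * y i) • (T j * M) :=
    fun i j M => by
      rw [hT i, smul_mul_assoc, add_mul, mul_assoc, ← mul_assoc f, hfT, smul_mul_assoc, one_mul,
        smul_add, smul_smul]
  simp only [altTrace, Finset.mul_sum, ← Finset.sum_add_distrib]
  refine Finset.sum_congr rfl fun σ _ => ?_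
  simp only [List.map_cons, List.prod_cons, List.map_append, List.prod_append, List.map_nil,
    List.prod_nil, Function.comp_apply, mul_one, hpair, mul_add, mul_smul_comm, trace_add,
    trace_smul, smul_eq_mul, mul_assoc]
  ring

theorem altTrace_weight_eq_zero [NeZero (2 : K)] (hE : IsClifford K E)
    (hT : ∀ j, T j = c • (E j * f + y j • 1)) (hfT : ∀ j, f * T j = E j) :
    ∀ (L R : List (Fin p)) (b : Fin p), (b :: (L ++ R)).Nodup → L ++ R ≠ [] → Even L.length →
      Even R.length → altTrace E T (fun σ => y (σ b)) L R = 0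
  | L, [], b, hnd, hne, hL, _ => by
    rw [List.append_nil] at hnd hne
    obtain ⟨j, hj⟩ := List.exists_mem_of_ne_nil L hne
    refine Finset.sum_eq_zero fun σ _ => ?_
    have hodd : Odd ((L.map σ).length + (L.map σ).count (σ j)) := by
      rw [List.length_map, List.count_map_of_injective _ _ σ.injective,
        List.count_eq_one_of_mem (List.nodup_cons.mp hnd).2 hj]
      exact hL.add_one
    rw [List.map_nil, List.prod_nil, mul_one, ← List.map_map,
      trace_prod_map_eq_zero hE.mul_self hE.anticomm hodd, mul_zero, mul_zero]
  | L, [_], _, _, _, _, hR => absurd hR (by simp)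
  | L, i :: j :: R, b, hnd, _, hL, hR => by
    have hnd' : (b :: (L ++ [i, j] ++ R)).Nodup := by simpa using hnd
    rw [altTrace_cons_cons hT hfT,
      altTrace_weight_eq_zero hE hT hfT (L ++ [i, j]) R b hnd' (by simp)
        (by simpa using hL.add even_two) (by simpa [Nat.even_add_one] using hR),
      altTrace_eq_zero_of_swap (a := b) (b := i) (by grind) (by grind) (by grind) (by grind)
        (by grind) fun σ => by simp [mul_comm]]
    ring

theorem altTrace_append_singleton [NeZero (2 : K)] (hE : IsClifford K E)
    (hT : ∀ j, T j = c • (E j * f + y j • 1)) (hfT : ∀ j, f * T j = E j) :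
    ∀ (L R : List (Fin p)) (i : Fin p), (i :: (L ++ R)).Nodup → Even L.length → Even R.length →
      altTrace E T (fun _ => 1) L (R ++ [i])
        = c ^ (R.length / 2) * altTrace E T (fun _ => 1) (L ++ R) [i]
  | L, [], _, _, _, _ => by simp
  | L, [_], _, _, _, hR => absurd hR (by simp)
  | L, j :: j' :: R, i, hnd, hL, hR => by
    have hR' : Even R.length := by simpa [Nat.even_add_one] using hR
    rw [List.cons_append, List.cons_append, altTrace_cons_cons hT hfT,
      altTrace_append_singleton hE hT hfT (L ++ [j, j']) R i (by simpa using hnd)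
        (by simpa using hL.add even_two) hR']
    simp only [one_mul]
    rw [altTrace_weight_eq_zero hE hT hfT L (j' :: (R ++ [i])) j (by grind) (by simp) hL
        (by simpa [Nat.even_add_one] using hR'),
      List.length_cons, List.length_cons, show (R.length + 1 + 1) / 2 = R.length / 2 + 1 by omega,
      pow_succ]
    simp only [List.append_assoc, List.cons_append, List.nil_append]
    ring

theorem altTrace_singleton [NeZero (2 : K)] (hE : IsClifford K E)
    (hT : ∀ j, T j = c • (E j * f + y j • 1)) (hfT : ∀ j, f * T j = E j) {L : List (Fin p)}
    {i : Fin p} (hnd : (i :: L).Nodup) (hne : L ≠ []) (hL : Even L.length) :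
    altTrace E T (fun _ => 1) L [i]
      = c * ∑ σ : Perm (Fin p), (Perm.sign σ : ℤ) * (((L ++ [i]).map (E ∘ σ)).prod * f).trace := by
  calc altTrace E T (fun _ => 1) L [i]
      = c * ∑ σ : Perm (Fin p), (Perm.sign σ : ℤ) * (((L ++ [i]).map (E ∘ σ)).prod * f).trace
        + c * altTrace E T (fun σ => y (σ i)) L [] := by
        simp only [altTrace, Finset.mul_sum, ← Finset.sum_add_distrib]
        refine Finset.sum_congr rfl fun σ _ => ?_
        simp only [List.map_cons, List.map_nil, List.prod_cons, List.prod_nil, List.map_append,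
          List.prod_append, Function.comp_apply, mul_one, hT, mul_smul_comm, mul_add, trace_smul,
          trace_add, smul_eq_mul, mul_assoc]
        ring
    _ = _ := by
        rw [altTrace_weight_eq_zero hE hT hfT L [] i (by simpa using hnd) (by simpa using hne) hL
          Even.zero, mul_zero, add_zero]

theorem altTrace_finRange [NeZero (2 : K)] (hE : IsClifford K E)
    (hT : ∀ j, T j = c • (E j * f + y j • 1)) (hfT : ∀ j, f * T j = E j) (hp : Odd p)
    (hp1 : 1 < p) :
    altTrace E T (fun _ => 1) [] (List.finRange p)
      = c ^ ((p + 1) / 2) * (p.factorial * ((List.ofFn E).prod * f).trace) := by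
  have hne : List.finRange p ≠ [] := by rw [Ne, List.finRange_eq_nil_iff]; omega
  set R := (List.finRange p).dropLast
  set i := (List.finRange p).getLast hne
  have hsplit : List.finRange p = R ++ [i] := (List.dropLast_append_getLast hne).symm
  have hnd : (i :: R).Nodup := by
    have := List.nodup_finRange p
    rw [hsplit] at this
    exact List.nodup_append_comm.mp this
  have hlen : R.length = p - 1 := by simp [R]
  have hR : Even R.length := by
    obtain ⟨m, hm⟩ := hp
    exact ⟨m, by omega⟩
  rw [hsplit, altTrace_append_singleton hE hT hfT [] R i (by simpa using hnd) Even.zero hR,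
    List.nil_append, altTrace_singleton hE hT hfT hnd (List.ne_nil_of_length_pos (by omega)) hR,
    ← hsplit]
  simp_rw [← List.ofFn_eq_map]
  rw [sum_sign_mul_trace_prod_ofFn_comp_mul hE.anticomm, ← mul_assoc, ← pow_succ, hlen,
    show (p - 1) / 2 + 1 = (p + 1) / 2 by omega]

end AltTrace

theorem Real.rpow_neg_natCast_add_one_div_two {c : ℝ} (hc : 0 ≤ c) {p : ℕ} (hp : Odd p) :
    c ^ (-((p : ℝ) + 1) / 2) = c⁻¹ ^ ((p + 1) / 2) := by
  rw [show -((p : ℝ) + 1) / 2 = -(((p + 1) / 2 : ℕ) : ℝ) by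
    rw [Nat.cast_div (even_iff_two_dvd.mp hp.add_one) (by norm_num)]
    push_cast
    ring, Real.rpow_neg hc, Real.rpow_natCast, inv_pow]

theorem stmt_12_general (k : ℕ) (hk : 2 ≤ k) (p : ℕ) (hp : p = 2 * k - 1)
    (N : ℕ) (E : Fin p → Matrix (Fin N) (Fin N) ℂ)
    (hcliff : ∀ i j, E i * E j + E j * E i
      = if i = j then (-2 : ℂ) • (1 : Matrix (Fin N) (Fin N) ℂ) else 0)
    (a : ℝ) (ha : a ≠ 0) (x : Fin p → ℝ)
    (f : Matrix (Fin N) (Fin N) ℂ)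
    (hf : f = (a : ℂ) • (1 : Matrix (Fin N) (Fin N) ℂ)
      + ∑ j, (x j : ℂ) • E j) :
    IsUnit f ∧
    ∑ σ : Equiv.Perm (Fin p), ((Equiv.Perm.sign σ : ℤ) : ℂ) *
        (List.ofFn fun b : Fin p => f⁻¹ * E (σ b)).prod.trace
      = (Nat.factorial p : ℂ) * (a : ℂ)
        * (((a ^ 2 + ∑ j, x j ^ 2 : ℝ) ^ (-((p : ℝ) + 1) / 2) : ℝ) : ℂ)
        * (List.ofFn E).prod.trace := by
  have hE : IsClifford ℂ E := hcliff
  have hodd : Odd p := ⟨k - 1, by omega⟩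
  set c : ℝ := a ^ 2 + ∑ j, x j ^ 2
  have hc : 0 < c := by positivity
  have hcC : (a : ℂ) ^ 2 + ∑ j, (x j : ℂ) ^ 2 = (c : ℂ) := by simp [c]
  have hc0 : (a : ℂ) ^ 2 + ∑ j, (x j : ℂ) ^ 2 ≠ 0 := by rw [hcC]; exact_mod_cast hc.ne'
  have hunit : IsUnit f := hf ▸ hE.isUnit_smul_one_add hc0
  have hT : ∀ j, f⁻¹ * E j = (c : ℂ)⁻¹ • (E j * f + (2 * (x j : ℂ)) • 1) := fun j => by
    rw [hf, hE.inv_smul_one_add hc0, hcC, smul_mul_assoc, hE.sub_mul_eq_mul_add]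
  have hfT : ∀ j, f * (f⁻¹ * E j) = E j := fun j => by
    rw [← mul_assoc, mul_nonsing_inv f ((isUnit_iff_isUnit_det f).mp hunit), one_mul]
  refine ⟨hunit, ?_⟩
  have key := altTrace_finRange hE hT hfT hodd (by omega)
  simp only [altTrace, List.map_nil, List.prod_nil, one_mul, ← List.ofFn_eq_map,
    Function.comp_def] at key
  rw [key, hf, hE.trace_prod_ofFn_mul_smul_one_add hodd (by omega),
    Real.rpow_neg_natCast_add_one_div_two hc.le hodd]
  push_cast
  ring

/-- let `p = 2k-1` (`k ≥ 2`), `E₁,…,E_p` skew-adjoint Clifford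
matrices, `a ≠ 0` real, `x ∈ ℝ^p`, `f = a·I + Σⱼ xⱼ Eⱼ`. Then `f` is
invertible and `Σ_{σ ∈ S_p} sgn σ · tr(f⁻¹E_{σ(1)} ⋯ f⁻¹E_{σ(p)})
  = p! a (a² + |x|²)^{-(p+1)/2} tr(E₁⋯E_p)`. -/
theorem stmt_12 (k : ℕ) (hk : 2 ≤ k) (p : ℕ) (hp : p = 2 * k - 1)
    (N : ℕ) (hN : 1 ≤ N) (E : Fin p → Matrix (Fin N) (Fin N) ℂ)
    (hskew : ∀ i, (E i)ᴴ = -(E i))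
    (hcliff : ∀ i j, E i * E j + E j * E i
      = if i = j then (-2 : ℂ) • (1 : Matrix (Fin N) (Fin N) ℂ) else 0)
    (a : ℝ) (ha : a ≠ 0) (x : Fin p → ℝ)
    (f : Matrix (Fin N) (Fin N) ℂ)
    (hf : f = (a : ℂ) • (1 : Matrix (Fin N) (Fin N) ℂ)
      + ∑ j, (x j : ℂ) • E j) :
    IsUnit f ∧
    ∑ σ : Equiv.Perm (Fin p), ((Equiv.Perm.sign σ : ℤ) : ℂ) *
        (List.ofFn fun b : Fin p => f⁻¹ * E (σ b)).prod.trace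
      = (Nat.factorial p : ℂ) * (a : ℂ)
        * (((a ^ 2 + ∑ j, x j ^ 2 : ℝ) ^ (-((p : ℝ) + 1) / 2) : ℝ) : ℂ)
        * (List.ofFn E).prod.trace :=
  stmt_12_general k hk p hp N E hcliff a ha x f hf
end

section
/- Let k ≥ 1 be an integer and a ∈ ℝ with a ≠ 0. Then the function x ↦ a·(a² + |x|²)^{−k} is integrable on ℝ^{2k−1} and ∫_{ℝ^{2k−1}} a (a² + |x|²)^{−k} dx = sgn(a) · π^k / (k−1)!. -/
/-!
Write `(b + ‖v‖²)^(-s) = Γ(s)⁻¹ ∫₀^∞ t^(s-1) e^(-(b + ‖v‖²) t) dt` (a Gamma integral)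
and integrate over `v` first: the Gaussian integral contributes `(π / t)^(n/2)`, and what is left is
again a Gamma integral. Hence `∫_{ℝⁿ} (b + ‖v‖²)^(-s) = π^(n/2) Γ(s - n/2) / Γ(s) · b^(n/2 - s)`
whenever `n / 2 < s`. For `n = 2k - 1`, `s = k`, `b = a²` this is `π^k / (k-1)! · |a|⁻¹`,
as `Γ(1/2) = √π`.
-/

open MeasureTheory Real Set Module

lemma exp_neg_add_mul (b x t : ℝ) : rexp (-((b + x) * t)) = rexp (-(b * t)) * rexp (-t * x) := by
  rw [← Real.exp_add]
  ring_nf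

lemma rpow_neg_eq_integral_exp {r s : ℝ} (hr : 0 < r) (hs : 0 < s) :
    r ^ (-s) = (Gamma s)⁻¹ * ∫ t in Ioi 0, t ^ (s - 1) * rexp (-(r * t)) := by
  rw [integral_rpow_mul_exp_neg_mul_Ioi hs hr, one_div, inv_rpow hr.le, rpow_neg hr.le,
    mul_comm _ (Gamma s), inv_mul_cancel_left₀ (Gamma_pos_of_pos hs).ne']

lemma mul_sq_rpow_neg_half (a : ℝ) : a * (a ^ 2) ^ (-(1 / 2) : ℝ) = Real.sign a := by
  rw [rpow_neg (sq_nonneg a), ← sqrt_eq_rpow, sqrt_sq_eq_abs]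
  rcases lt_trichotomy a 0 with h | rfl | h
  · rw [abs_of_neg h, sign_of_neg h, inv_neg, mul_neg, mul_inv_cancel₀ h.ne]
  · simp
  · rw [abs_of_pos h, sign_of_pos h, mul_inv_cancel₀ h.ne']

section InnerProductSpace

variable {V : Type*} [NormedAddCommGroup V] [InnerProductSpace ℝ V] [FiniteDimensional ℝ V]
  [MeasurableSpace V] [BorelSpace V]

lemma integrable_exp_neg_mul_sq_norm {c : ℝ} (hc : 0 < c) :
    Integrable (fun v : V => rexp (-c * ‖v‖ ^ 2)) := by
  have := (GaussianFourier.integrable_cexp_neg_mul_sq_norm_add (V := V) (b := c)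
    (by simpa) 0 0).norm
  simpa [Complex.norm_exp, ← Complex.ofReal_pow] using this

lemma integral_rpow_mul_exp_neg_add_sq_norm {b s t : ℝ} (ht : 0 < t) :
    ∫ v : V, t ^ (s - 1) * rexp (-((b + ‖v‖ ^ 2) * t))
      = π ^ (finrank ℝ V / 2 : ℝ) * (t ^ (s - finrank ℝ V / 2 - 1) * rexp (-(b * t))) := by
  simp_rw [exp_neg_add_mul, ← mul_assoc]
  rw [integral_const_mul, GaussianFourier.integral_rexp_neg_mul_sq_norm ht,
    div_rpow pi_pos.le ht.le, sub_right_comm, rpow_sub ht (s - 1)]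
  ring

lemma integrable_rpow_mul_exp_neg_add_sq_norm {b s : ℝ} (hb : 0 < b)
    (hs : finrank ℝ V / 2 < s) :
    Integrable (fun p : V × ℝ => p.2 ^ (s - 1) * rexp (-((b + ‖p.1‖ ^ 2) * p.2)))
      (volume.prod (volume.restrict (Ioi 0))) := by
  refine (integrable_prod_iff' ?_).2 ⟨?_, ?_⟩
  · have : Measurable (fun p : V × ℝ => p.2 ^ (s - 1) * rexp (-((b + ‖p.1‖ ^ 2) * p.2))) := by
      fun_prop
    exact this.aestronglyMeasurable
  · filter_upwards [ae_restrict_mem measurableSet_Ioi] with t ht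
    simp_rw [exp_neg_add_mul, ← mul_assoc]
    exact (integrable_exp_neg_mul_sq_norm (V := V) ht).const_mul _
  · have hGamma : IntegrableOn
        (fun t : ℝ => t ^ (s - finrank ℝ V / 2 - 1) * rexp (-b * t ^ (1 : ℝ))) (Ioi 0) :=
      integrableOn_rpow_mul_exp_neg_mul_rpow (by linarith) one_pos hb
    refine IntegrableOn.congr_fun (hGamma.const_mul (π ^ (finrank ℝ V / 2 : ℝ)))
      (fun t (ht : 0 < t) => ?_) measurableSet_Ioi
    simp only [rpow_one, neg_mul]
    rw [← integral_rpow_mul_exp_neg_add_sq_norm ht]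
    congr 1 with v
    rw [Real.norm_of_nonneg (by positivity)]

theorem integrable_rpow_neg_add_norm_sq {b s : ℝ} (hb : 0 < b) (hs : finrank ℝ V / 2 < s) :
    Integrable (fun v : V => (b + ‖v‖ ^ 2) ^ (-s)) := by
  have hs₀ : 0 < s := lt_of_le_of_lt (by positivity) hs
  refine ((integrable_rpow_mul_exp_neg_add_sq_norm hb hs).integral_prod_left.const_mul
    (Gamma s)⁻¹).congr ?_
  filter_upwards with v
  rw [rpow_neg_eq_integral_exp (by positivity) hs₀]

theorem integral_rpow_neg_add_norm_sq {b s : ℝ} (hb : 0 < b) (hs : finrank ℝ V / 2 < s) :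
    ∫ v : V, (b + ‖v‖ ^ 2) ^ (-s)
      = π ^ (finrank ℝ V / 2 : ℝ) * Gamma (s - finrank ℝ V / 2) / Gamma s
        * b ^ (finrank ℝ V / 2 - s : ℝ) := by
  have hs₀ : 0 < s := lt_of_le_of_lt (by positivity) hs
  calc ∫ v : V, (b + ‖v‖ ^ 2) ^ (-s)
      = (Gamma s)⁻¹ * ∫ v : V, ∫ t in Ioi 0, t ^ (s - 1) * rexp (-((b + ‖v‖ ^ 2) * t)) := by
        rw [← integral_const_mul]
        congr 1 with v
        exact rpow_neg_eq_integral_exp (by positivity) hs₀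
    _ = (Gamma s)⁻¹ * ∫ t in Ioi 0, ∫ v : V, t ^ (s - 1) * rexp (-((b + ‖v‖ ^ 2) * t)) := by
        rw [integral_integral_swap (integrable_rpow_mul_exp_neg_add_sq_norm hb hs)]
    _ = (Gamma s)⁻¹ * ∫ t in Ioi 0,
          π ^ (finrank ℝ V / 2 : ℝ) * (t ^ (s - finrank ℝ V / 2 - 1) * rexp (-(b * t))) := by
        congr 1
        exact setIntegral_congr_fun measurableSet_Ioi
          fun t ht => integral_rpow_mul_exp_neg_add_sq_norm ht
    _ = _ := by
        rw [integral_const_mul, integral_rpow_mul_exp_neg_mul_Ioi (by linarith) hb, one_div,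
          inv_rpow hb.le, ← rpow_neg hb.le, neg_sub]
        ring

end InnerProductSpace

/-- For `k ≥ 1` and real `a ≠ 0`, the function
`x ↦ a * (a² + |x|²)⁻ᵏ` is integrable on `ℝ^{2k-1}` and its integral equals
`sgn(a) * π^k / (k-1)!`. -/
theorem stmt_13 (k : ℕ) (hk : 1 ≤ k) (a : ℝ) (ha : a ≠ 0) :
    Integrable (fun x : EuclideanSpace ℝ (Fin (2 * k - 1)) =>
      a / (a ^ 2 + ‖x‖ ^ 2) ^ k) ∧
    ∫ x : EuclideanSpace ℝ (Fin (2 * k - 1)), a / (a ^ 2 + ‖x‖ ^ 2) ^ k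
      = Real.sign a * Real.pi ^ k / (Nat.factorial (k - 1)) := by
  have hdim : (finrank ℝ (EuclideanSpace ℝ (Fin (2 * k - 1))) : ℝ) / 2 = k - 1 / 2 := by
    rw [finrank_euclideanSpace_fin, Nat.cast_sub (by omega)]
    push_cast
    ring
  have hs : (finrank ℝ (EuclideanSpace ℝ (Fin (2 * k - 1))) : ℝ) / 2 < k := by
    rw [hdim]
    linarith
  have ha2 : 0 < a ^ 2 := by positivity
  have hrpow (x : EuclideanSpace ℝ (Fin (2 * k - 1))) :
      a / (a ^ 2 + ‖x‖ ^ 2) ^ k = a * (a ^ 2 + ‖x‖ ^ 2) ^ (-(k : ℝ)) := by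
    rw [rpow_neg (by positivity), rpow_natCast, div_eq_mul_inv]
  simp_rw [hrpow]
  refine ⟨(integrable_rpow_neg_add_norm_sq ha2 hs).const_mul a, ?_⟩
  have hGamma : Gamma k = (k - 1).factorial := by
    rw [← Gamma_nat_eq_factorial, Nat.cast_sub hk, Nat.cast_one, sub_add_cancel]
  have hpi : π ^ ((k : ℝ) - 1 / 2) * Gamma (1 / 2) = π ^ k := by
    rw [Gamma_one_half_eq, sqrt_eq_rpow, ← rpow_add pi_pos, sub_add_cancel, rpow_natCast]
  rw [integral_const_mul, integral_rpow_neg_add_norm_sq ha2 hs, hdim, sub_sub_cancel,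
    show (k : ℝ) - 1 / 2 - k = -(1 / 2) by ring, hpi, hGamma, ← mul_sq_rpow_neg_half a]
  ring
end

section
/- Let α, β ∈ ℝ satisfy β > −1 and 2α + β < −1. Then the function u ↦ (1+u²)^α u^β is integrable on (0,∞) and ∫_0^∞ (1+u²)^α u^β du = Γ(−α − β/2 − 1/2) · Γ((β+1)/2) / (2 Γ(−α)). -/
/-!
The substitution `x = u² / (1 + u²)` maps `(0, ∞)` increasingly onto `(0, 1)`, with
`dx = 2u / (1 + u²)² du` and `1 - x = 1 / (1 + u²)`. It turns `2 (1 + u²)^α u^β` into the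
Beta integrand `x^(a-1) (1 - x)^(b-1)` with `a = (β + 1) / 2`, `b = -α - a`, both positive
under the hypotheses, and `B(a, b) = Γ(a) Γ(b) / Γ(a + b)`.
-/

open MeasureTheory Set

lemma ofReal_rpow_mul_one_sub_rpow (a b : ℝ) {x : ℝ} (hx : x ∈ Icc (0 : ℝ) 1) :
    ((x ^ (a - 1) * (1 - x) ^ (b - 1) : ℝ) : ℂ)
      = (x : ℂ) ^ ((a : ℂ) - 1) * (1 - (x : ℂ)) ^ ((b : ℂ) - 1) := by
  rw [Complex.ofReal_mul, Complex.ofReal_cpow hx.1, Complex.ofReal_cpow (sub_nonneg.2 hx.2)]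
  push_cast
  rfl

lemma integrableOn_rpow_mul_one_sub_rpow {a b : ℝ} (ha : 0 < a) (hb : 0 < b) :
    IntegrableOn (fun x : ℝ => x ^ (a - 1) * (1 - x) ^ (b - 1)) (Ioo 0 1) := by
  have hC := Complex.betaIntegral_convergent (u := a) (v := b) (by simpa) (by simpa)
  rw [intervalIntegrable_iff_integrableOn_Ioc_of_le zero_le_one] at hC
  refine IntegrableOn.congr_fun (hC.mono_set Ioo_subset_Ioc_self).re (fun x hx => ?_)
    measurableSet_Ioo
  simp [← ofReal_rpow_mul_one_sub_rpow a b (Ioo_subset_Icc_self hx)]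

lemma integral_rpow_mul_one_sub_rpow {a b : ℝ} (ha : 0 < a) (hb : 0 < b) :
    ∫ x in Ioo (0 : ℝ) 1, x ^ (a - 1) * (1 - x) ^ (b - 1)
      = Real.Gamma a * Real.Gamma b / Real.Gamma (a + b) := by
  have hbeta : Complex.betaIntegral a b
      = ((∫ x in Ioo (0 : ℝ) 1, x ^ (a - 1) * (1 - x) ^ (b - 1) : ℝ) : ℂ) := by
    rw [Complex.betaIntegral, intervalIntegral.integral_of_le zero_le_one,
      integral_Ioc_eq_integral_Ioo, ← integral_complex_ofReal]
    exact setIntegral_congr_fun measurableSet_Ioo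
      fun x hx => (ofReal_rpow_mul_one_sub_rpow a b (Ioo_subset_Icc_self hx)).symm
  have h := Complex.betaIntegral_eq_Gamma_mul_div a b (by simpa) (by simpa)
  rw [hbeta, ← Complex.ofReal_add, Complex.Gamma_ofReal, Complex.Gamma_ofReal,
    Complex.Gamma_ofReal] at h
  exact_mod_cast h

lemma hasDerivAt_sq_div_one_add_sq (u : ℝ) :
    HasDerivAt (fun u : ℝ => u ^ 2 / (1 + u ^ 2)) (2 * u / (1 + u ^ 2) ^ 2) u := by
  refine ((hasDerivAt_pow 2 u).fun_div ((hasDerivAt_pow 2 u).const_add 1)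
    (by positivity)).congr_deriv ?_
  field_simp
  ring

lemma injOn_sq_div_one_add_sq : InjOn (fun u : ℝ => u ^ 2 / (1 + u ^ 2)) (Ioi 0) := by
  intro u (hu : 0 < u) v (hv : 0 < v) huv
  rw [div_eq_div_iff (by positivity) (by positivity)] at huv
  nlinarith

lemma image_sq_div_one_add_sq_Ioi : (fun u : ℝ => u ^ 2 / (1 + u ^ 2)) '' Ioi 0 = Ioo 0 1 := by
  ext x
  constructor
  · rintro ⟨u, hu : 0 < u, rfl⟩
    exact ⟨by positivity, (div_lt_one (by positivity)).2 (by linarith)⟩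
  · rintro ⟨hx0, hx1⟩
    have hx : 0 < x / (1 - x) := div_pos hx0 (by linarith)
    refine ⟨√(x / (1 - x)), Real.sqrt_pos.2 hx, ?_⟩
    have : 1 - x ≠ 0 := by linarith
    simp only [Real.sq_sqrt hx.le]
    field_simp
    ring

lemma sq_div_one_add_sq_rpow_mul_one_sub_rpow {u : ℝ} (hu : 0 < u) (a b : ℝ) :
    2 * u / (1 + u ^ 2) ^ 2
        * ((u ^ 2 / (1 + u ^ 2)) ^ (a - 1) * (1 - u ^ 2 / (1 + u ^ 2)) ^ (b - 1))
      = 2 * ((1 + u ^ 2) ^ (-(a + b)) * u ^ (2 * a - 1)) := by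
  set c := 1 + u ^ 2
  have hc : 0 < c := by positivity
  have h_one_sub : 1 - u ^ 2 / c = c⁻¹ := by field_simp; ring
  have hu_pow : u ^ (2 * a - 1) = u * (u ^ 2) ^ (a - 1) := by
    rw [show 2 * a - 1 = 1 + (2 : ℕ) * (a - 1) by push_cast; ring, Real.rpow_add hu,
      Real.rpow_one, Real.rpow_mul hu.le, Real.rpow_natCast]
  have hc_pow : c ^ (a + b) = c ^ 2 * c ^ (a - 1) * c ^ (b - 1) := by
    rw [← Real.rpow_natCast, ← Real.rpow_add hc, ← Real.rpow_add hc]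
    congr 1
    push_cast
    ring
  rw [h_one_sub, Real.div_rpow (sq_nonneg u) hc.le, Real.inv_rpow hc.le, Real.rpow_neg hc.le,
    hu_pow, hc_pow]
  field_simp

lemma abs_deriv_smul_eqOn_sq_div_one_add_sq (g : ℝ → ℝ) :
    EqOn (fun u : ℝ => |2 * u / (1 + u ^ 2) ^ 2| • g (u ^ 2 / (1 + u ^ 2)))
      (fun u => 2 * u / (1 + u ^ 2) ^ 2 * g (u ^ 2 / (1 + u ^ 2))) (Ioi 0) := by
  intro u (hu : 0 < u)
  simp only [smul_eq_mul, abs_of_pos (by positivity : 0 < 2 * u / (1 + u ^ 2) ^ 2)]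

lemma integrableOn_Ioo_zero_one_iff_comp_sq_div_one_add_sq (g : ℝ → ℝ) :
    IntegrableOn g (Ioo 0 1) ↔
      IntegrableOn (fun u => 2 * u / (1 + u ^ 2) ^ 2 * g (u ^ 2 / (1 + u ^ 2))) (Ioi 0) := by
  rw [← image_sq_div_one_add_sq_Ioi, integrableOn_image_iff_integrableOn_abs_deriv_smul
    measurableSet_Ioi (fun u _ => (hasDerivAt_sq_div_one_add_sq u).hasDerivWithinAt)
    injOn_sq_div_one_add_sq]
  exact integrableOn_congr_fun (abs_deriv_smul_eqOn_sq_div_one_add_sq g) measurableSet_Ioi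

lemma integral_Ioo_zero_one_eq_integral_comp_sq_div_one_add_sq (g : ℝ → ℝ) :
    ∫ x in Ioo 0 1, g x
      = ∫ u in Ioi 0, 2 * u / (1 + u ^ 2) ^ 2 * g (u ^ 2 / (1 + u ^ 2)) := by
  rw [← image_sq_div_one_add_sq_Ioi, integral_image_eq_integral_abs_deriv_smul
    measurableSet_Ioi (fun u _ => (hasDerivAt_sq_div_one_add_sq u).hasDerivWithinAt)
    injOn_sq_div_one_add_sq]
  exact setIntegral_congr_fun measurableSet_Ioi (abs_deriv_smul_eqOn_sq_div_one_add_sq g)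

/-- For real `α, β` with `β > -1` and `2α + β < -1`, the function
`u ↦ (1+u²)^α u^β` is integrable on `(0,∞)` and
`∫_0^∞ (1+u²)^α u^β du = Γ(-α - β/2 - 1/2) Γ((β+1)/2) / (2 Γ(-α))`. -/
theorem stmt_14 (α β : ℝ) (hβ : -1 < β) (hαβ : 2 * α + β < -1) :
    IntegrableOn (fun u : ℝ => (1 + u ^ 2) ^ α * u ^ β) (Set.Ioi 0) ∧
    ∫ u in Set.Ioi (0 : ℝ), (1 + u ^ 2) ^ α * u ^ β
      = Real.Gamma (-α - β / 2 - 1 / 2) * Real.Gamma ((β + 1) / 2)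
        / (2 * Real.Gamma (-α)) := by
  have ha : 0 < (β + 1) / 2 := by linarith
  have hb : 0 < -α - β / 2 - 1 / 2 := by linarith
  have hintegrand : EqOn
      (fun u : ℝ => 2 * u / (1 + u ^ 2) ^ 2 * ((u ^ 2 / (1 + u ^ 2)) ^ ((β + 1) / 2 - 1)
        * (1 - u ^ 2 / (1 + u ^ 2)) ^ (-α - β / 2 - 1 / 2 - 1)))
      (fun u => 2 * ((1 + u ^ 2) ^ α * u ^ β)) (Ioi 0) := by
    intro u (hu : 0 < u)
    simp only [sq_div_one_add_sq_rpow_mul_one_sub_rpow hu]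
    congr 3 <;> ring
  have hint := ((integrableOn_Ioo_zero_one_iff_comp_sq_div_one_add_sq _).1
    (integrableOn_rpow_mul_one_sub_rpow ha hb)).congr_fun hintegrand measurableSet_Ioi
  refine ⟨IntegrableOn.congr_fun (hint.const_mul (1 / 2)) (fun u _ => by ring) measurableSet_Ioi,
    ?_⟩
  have hval := integral_rpow_mul_one_sub_rpow ha hb
  rw [integral_Ioo_zero_one_eq_integral_comp_sq_div_one_add_sq,
    setIntegral_congr_fun measurableSet_Ioi hintegrand, integral_const_mul] at hval
  rw [show (β + 1) / 2 + (-α - β / 2 - 1 / 2) = -α by ring] at hval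
  linear_combination hval / 2
end
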